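/- arXiv:2207.07299 — 8 statements merged into one kernel-verified Lean document; each statement's English description precedes it below -/
import Mathlib

section
/- Fix p_1,…,p_{m−1} ∈ [0,1] and let p_m ~ Uniform(0,1). Run the SL procedure at level q > 0 on p_1,…,p_m. Then P{p_(R_q) = p_m} ≤ q/m, with equality whenever q ≤ 1. Equivalently, the set of values u ∈ [0,1] such that setting p_m = u makes p_m equal to the last rejection p_(R_q) has Lebesgue measure at most q/m, with equality if q ≤ 1. -/
open MeasureTheory ProbabilityTheory Filter

noncomputable section

/-- The uniform distribution on `[0,1]` (the null `p`-value distribution). -/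
def uniform01 : Measure ℝ := volume.restrict (Set.Icc 0 1)

/-- `orderStat m p k` is the `k`-th order statistic `p_(k)` of `p_1, …, p_m` (1-indexed),
with the conventions `p_(0) = 0` and `p_(k) = 0` for `k > m`. -/
def orderStat (m : ℕ) (p : Fin m → ℝ) (k : ℕ) : ℝ :=
  if h : 1 ≤ k ∧ k ≤ m then p (Tuple.sort p ⟨k - 1, by omega⟩) else 0

/-- The SL rejection count at level `q`: the largest minimizer over `k ∈ {0, …, m}`
of `p_(k) - q k / m`. -/
def slCount (m : ℕ) (q : ℝ) (p : Fin m → ℝ) : ℕ :=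
  sSup {k | k ≤ m ∧ ∀ j ≤ m,
    orderStat m p k - q * k / m ≤ orderStat m p j - q * j / m}

/-- The SL rejection threshold `τ_q = p_(R_q)`. -/
def slThreshold (m : ℕ) (q : ℝ) (p : Fin m → ℝ) : ℝ :=
  orderStat m p (slCount m q p)

/-- The empirical cdf `F_m` of `p_1, …, p_m`. -/
def ecdf (m : ℕ) (p : Fin m → ℝ) (t : ℝ) : ℝ :=
  ((Finset.univ.filter fun i => p i ≤ t).card : ℝ) / m

/-- The alternative `p`-value distribution, with density `f1` on `[0,1]`. -/
def altMeasure (f1 : ℝ → ℝ) : Measure ℝ :=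
  uniform01.withDensity fun t => ENNReal.ofReal (f1 t)

/-- The two-groups distribution of a pair `(H_i, p_i)`: `H_i ~ Bernoulli(1 - π0)`
(`false` meaning the null holds), `p_i | H_i = false ~ Unif[0,1]`, and
`p_i | H_i = true` has density `f1`. -/
def pairMeasure (π0 : ℝ) (f1 : ℝ → ℝ) : Measure (Bool × ℝ) :=
  ENNReal.ofReal π0 • (Measure.dirac false).prod uniform01
    + ENNReal.ofReal (1 - π0) • (Measure.dirac true).prod (altMeasure f1)

/-- The joint distribution of the i.i.d. pairs `(H_i, p_i)`, `i = 1, …, m`. -/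
def jointMeasure (m : ℕ) (π0 : ℝ) (f1 : ℝ → ℝ) : Measure (Fin m → Bool × ℝ) :=
  Measure.pi fun _ => pairMeasure π0 f1

/-- The `p`-values of an outcome of the two-groups model. -/
def pvals (m : ℕ) (x : Fin m → Bool × ℝ) (i : Fin m) : ℝ := (x i).2

/-- The marginal `p`-value mixture density `f = π0 + (1 - π0) f1`. -/
def mixDensity (π0 : ℝ) (f1 : ℝ → ℝ) (t : ℝ) : ℝ := π0 + (1 - π0) * f1 t

/-- The local false discovery rate `lfdr(t) = π0 / f(t)`. -/
def lfdr (π0 : ℝ) (f1 : ℝ → ℝ) (t : ℝ) : ℝ := π0 / mixDensity π0 f1 t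

/-- The event that, rejecting the `R` hypotheses with the smallest `p`-values,
the last rejection is a false discovery: `R > 0` and `H_(R) = 0`, where `H_(R)` is the
hypothesis indicator paired with the `R`-th smallest `p`-value. -/
def lastRejNull (m : ℕ) (R : ℕ) (x : Fin m → Bool × ℝ) : Prop :=
  ∃ h : 1 ≤ R ∧ R ≤ m,
    (x (Tuple.sort (pvals m x) ⟨R - 1, by omega⟩)).1 = false

/-- The maximum of `g` over a finite set `S`, with the convention that the
maximum over the empty set is `0`. -/
def maxOver {ι : Type*} (S : Finset ι) (g : ι → ℝ) : ℝ :=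
  if h : S.Nonempty then S.sup' h g else 0

/-- The SL rejection set `𝓡_q = {i : p_i ≤ τ_q}`. -/
def rejSet (m : ℕ) (q : ℝ) (p : Fin m → ℝ) : Finset (Fin m) :=
  Finset.univ.filter fun i => p i ≤ slThreshold m q p

open Finset

namespace SL

lemma card_filter_perm {M : ℕ} (σ : Equiv.Perm (Fin M)) (P : Fin M → Prop) [DecidablePred P] :
    (Finset.univ.filter fun j => P (σ j)).card = (Finset.univ.filter P).card := by
  apply Finset.card_bij (fun j _ => σ j)
  · intro a ha; simp at ha ⊢; exact ha
  · intro a _ b _ h; exact σ.injective h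
  · intro b hb; exact ⟨σ.symm b, by simpa using hb, by simp⟩

lemma mono_count {M : ℕ} {g : Fin M → ℝ} (hg : Monotone g) {k : ℕ} (hk1 : 1 ≤ k) (hkM : k ≤ M)
    (Q : ℝ → Prop) [DecidablePred Q] (hQ : ∀ a b, a ≤ b → Q b → Q a) :
    Q (g ⟨k - 1, by omega⟩) ↔ k ≤ (Finset.univ.filter fun j => Q (g j)).card := by
  constructor
  · intro h
    have hsub : Finset.Iic (⟨k - 1, by omega⟩ : Fin M) ⊆ Finset.univ.filter fun j => Q (g j) := by
      intro j hj
      simp only [Finset.mem_Iic] at hj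
      simp only [Finset.mem_filter, Finset.mem_univ, true_and]
      exact hQ _ _ (hg hj) h
    calc k = (Finset.Iic (⟨k - 1, by omega⟩ : Fin M)).card := by
              rw [Fin.card_Iic]; simp only [Fin.val_mk]; omega
      _ ≤ _ := Finset.card_le_card hsub
  · intro h
    by_contra hc
    have hsub : (Finset.univ.filter fun j => Q (g j)) ⊆ Finset.Iio (⟨k - 1, by omega⟩ : Fin M) := by
      intro j hj
      simp only [Finset.mem_filter, Finset.mem_univ, true_and] at hj
      simp only [Finset.mem_Iio]
      by_contra hjk
      push_neg at hjk
      exact hc (hQ _ _ (hg hjk) hj)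
    have := Finset.card_le_card hsub
    rw [Fin.card_Iio] at this; simp only [Fin.val_mk] at this
    omega

lemma orderStat_le_iff {M : ℕ} (x : Fin M → ℝ) {k : ℕ} (hk1 : 1 ≤ k) (hkM : k ≤ M) (v : ℝ) :
    orderStat M x k ≤ v ↔ k ≤ (Finset.univ.filter fun i => x i ≤ v).card := by
  rw [orderStat, dif_pos ⟨hk1, hkM⟩]
  rw [show (Finset.univ.filter fun i => x i ≤ v)
      = Finset.univ.filter fun i => (fun t => t ≤ v) (x i) from rfl,
    ← card_filter_perm (Tuple.sort x) (fun i => (fun t => t ≤ v) (x i))]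
  exact mono_count (Tuple.monotone_sort x) hk1 hkM (fun t => t ≤ v)
    (fun a b hab hb => le_trans hab hb)

lemma orderStat_lt_iff {M : ℕ} (x : Fin M → ℝ) {k : ℕ} (hk1 : 1 ≤ k) (hkM : k ≤ M) (v : ℝ) :
    orderStat M x k < v ↔ k ≤ (Finset.univ.filter fun i => x i < v).card := by
  rw [orderStat, dif_pos ⟨hk1, hkM⟩]
  rw [show (Finset.univ.filter fun i => x i < v)
      = Finset.univ.filter fun i => (fun t => t < v) (x i) from rfl,
    ← card_filter_perm (Tuple.sort x) (fun i => (fun t => t < v) (x i))]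
  exact mono_count (Tuple.monotone_sort x) hk1 hkM (fun t => t < v)
    (fun a b hab hb => lt_of_le_of_lt hab hb)

lemma orderStat_zero {M : ℕ} (x : Fin M → ℝ) : orderStat M x 0 = 0 := by
  rw [orderStat, dif_neg]; omega

lemma orderStat_mem {M : ℕ} (x : Fin M → ℝ) {k : ℕ} (hk1 : 1 ≤ k) (hkM : k ≤ M) :
    ∃ i, orderStat M x k = x i := by
  rw [orderStat, dif_pos ⟨hk1, hkM⟩]; exact ⟨_, rfl⟩

end SL

namespace SL

variable {n : ℕ} {p : Fin n → ℝ} {q : ℝ} {u : ℝ}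

/-- `V n q p j = p_(j) - q j/m` for the fixed sample. -/
def V (n : ℕ) (q : ℝ) (p : Fin n → ℝ) (j : ℕ) : ℝ := orderStat n p j - q * j / (n + 1)

lemma snoc_count (p : Fin n → ℝ) (u : ℝ) (P : ℝ → Prop) [DecidablePred P] :
    ((Finset.univ : Finset (Fin (n+1))).filter fun i => P ((Fin.snoc p u : Fin (n+1) → ℝ) i)).card
      = ((Finset.univ : Finset (Fin n)).filter fun i => P (p i)).card + if P u then 1 else 0 := by
  simp only [Finset.card_filter]
  rw [Fin.sum_univ_castSucc]
  simp [Fin.snoc_castSucc, Fin.snoc_last]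

lemma mainChar (hq0 : 0 < q) (hu0 : 0 < u) (hu1 : u ≤ 1) (hup : u ∉ Set.range p) :
    slThreshold (n+1) q (Fin.snoc p u) = u ↔
    ∃ s : ℕ, s ≤ n ∧ ((Finset.univ : Finset (Fin n)).filter fun i => p i < u).card = s ∧
      (∀ k ≤ s, u - q * (s+1) / (n+1) ≤ V n q p k) ∧
      (∀ j, s+1 ≤ j → j ≤ n → u < q * s / (n+1) + V n q p j) := by
  classical
  set x : Fin (n+1) → ℝ := (Fin.snoc p u : Fin (n+1) → ℝ) with hx
  have hne : ∀ i, p i ≠ u := fun i h => hup ⟨i, h⟩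
  set cnt := ((Finset.univ : Finset (Fin n)).filter fun i => p i < u).card with hcntdef
  have hcntn : cnt ≤ n := by
    calc cnt ≤ (Finset.univ : Finset (Fin n)).card := Finset.card_filter_le _ _
      _ = n := by simp
  -- counting facts
  have hple : ∀ i, (p i ≤ u ↔ p i < u) :=
    fun i => ⟨fun h => lt_of_le_of_ne h (hne i), le_of_lt⟩
  have hcnt_le : ((Finset.univ : Finset (Fin n)).filter fun i => p i ≤ u).card = cnt := by
    rw [hcntdef]; congr 1; apply Finset.filter_congr; intro i _; simp [hple i]
  have Nxle : ∀ v : ℝ, ((Finset.univ : Finset (Fin (n+1))).filter fun i => x i ≤ v).card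
      = ((Finset.univ : Finset (Fin n)).filter fun i => p i ≤ v).card
        + if u ≤ v then 1 else 0 := fun v => snoc_count p u (fun t => t ≤ v)
  have Nxlt : ∀ v : ℝ, ((Finset.univ : Finset (Fin (n+1))).filter fun i => x i < v).card
      = ((Finset.univ : Finset (Fin n)).filter fun i => p i < v).card
        + if u < v then 1 else 0 := fun v => snoc_count p u (fun t => t < v)
  have hNxleu : ((Finset.univ : Finset (Fin (n+1))).filter fun i => x i ≤ u).card = cnt + 1 := by
    rw [Nxle u, hcnt_le, if_pos le_rfl]
  have hNxltu : ((Finset.univ : Finset (Fin (n+1))).filter fun i => x i < u).card = cnt := by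
    rw [Nxlt u, if_neg (lt_irrefl u), ← hcntdef, add_zero]
  -- order statistics of x around rank cnt+1
  have hOx_r : orderStat (n+1) x (cnt+1) = u := by
    apply le_antisymm
    · rw [orderStat_le_iff x (by omega) (by omega) u, hNxleu]
    · by_contra hlt
      push_neg at hlt
      rw [orderStat_lt_iff x (by omega) (by omega) u, hNxltu] at hlt
      omega
  have hOx_low : ∀ k, k ≤ cnt → orderStat (n+1) x k = orderStat n p k := by
    intro k hk
    rcases Nat.eq_zero_or_pos k with hk0 | hk1
    · rw [hk0, orderStat_zero, orderStat_zero]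
    apply le_antisymm
    · rw [orderStat_le_iff x hk1 (by omega)]
      rw [Nxle]
      have : k ≤ ((Finset.univ : Finset (Fin n)).filter fun i => p i ≤ orderStat n p k).card :=
        (orderStat_le_iff p hk1 (by omega) _).mp le_rfl
      omega
    · rw [orderStat_le_iff p hk1 (by omega)]
      have h1 : k ≤ ((Finset.univ : Finset (Fin (n+1))).filter
          fun i => x i ≤ orderStat (n+1) x k).card :=
        (orderStat_le_iff x hk1 (by omega) _).mp le_rfl
      rw [Nxle] at h1
      by_cases hcase : u ≤ orderStat (n+1) x k
      · -- then all p i < u are ≤ orderStat x k, so the p-count is ≥ cnt ≥ k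
        have hsub : ((Finset.univ : Finset (Fin n)).filter fun i => p i < u)
            ⊆ (Finset.univ : Finset (Fin n)).filter fun i => p i ≤ orderStat (n+1) x k := by
          intro i hi
          simp only [Finset.mem_filter, Finset.mem_univ, true_and] at hi ⊢
          exact le_trans (le_of_lt hi) hcase
        have := Finset.card_le_card hsub
        omega
      · rw [if_neg hcase] at h1; omega
  have hOx_high : ∀ k, cnt + 2 ≤ k → k ≤ n + 1 →
      orderStat (n+1) x k = orderStat n p (k-1) := by
    intro k hk2 hkn
    have hj1 : 1 ≤ k - 1 := by omega
    have hjn : k - 1 ≤ n := by omega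
    have huP : u ≤ orderStat n p (k-1) := by
      by_contra hlt
      push_neg at hlt
      have := (orderStat_lt_iff p hj1 hjn u).mp hlt
      rw [← hcntdef] at this
      omega
    apply le_antisymm
    · rw [orderStat_le_iff x (by omega) (by omega), Nxle, if_pos huP]
      have : k - 1 ≤ ((Finset.univ : Finset (Fin n)).filter
          fun i => p i ≤ orderStat n p (k-1)).card :=
        (orderStat_le_iff p hj1 hjn _).mp le_rfl
      omega
    · rw [orderStat_le_iff p hj1 hjn]
      have h1 : k ≤ ((Finset.univ : Finset (Fin (n+1))).filter
          fun i => x i ≤ orderStat (n+1) x k).card :=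
        (orderStat_le_iff x (by omega) (by omega) _).mp le_rfl
      rw [Nxle] at h1
      by_cases hcase : u ≤ orderStat (n+1) x k
      · rw [if_pos hcase] at h1; omega
      · rw [if_neg hcase] at h1; omega
  -- uniqueness of the rank of u
  have hOx_uniq : ∀ k, 1 ≤ k → k ≤ n+1 → orderStat (n+1) x k = u → k = cnt + 1 := by
    intro k hk1 hkn hk
    rcases lt_trichotomy k (cnt+1) with h | h | h
    · exfalso
      have : orderStat (n+1) x k < u := by
        rw [orderStat_lt_iff x hk1 hkn u, hNxltu]; omega
      rw [hk] at this; exact lt_irrefl _ this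
    · exact h
    · exfalso
      have : ¬ orderStat (n+1) x k ≤ u := by
        rw [orderStat_le_iff x hk1 hkn u, hNxleu]; omega
      exact this (le_of_eq hk)
  -- the argmin structure
  set F : ℕ → ℝ := fun k => orderStat (n+1) x k - q * k / ((n:ℝ)+1) with hF
  have hslc : slCount (n+1) q x = sSup {k | k ≤ n+1 ∧ ∀ j ≤ n+1, F k ≤ F j} := by
    rw [slCount]
    congr 1
    ext k
    simp only [Set.mem_setOf_eq, hF]
    constructor <;> rintro ⟨h1, h2⟩ <;> refine ⟨h1, fun j hj => ?_⟩ <;>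
      · have := h2 j hj
        push_cast at this ⊢
        linarith
  have hSne : Set.Nonempty {k | k ≤ n+1 ∧ ∀ j ≤ n+1, F k ≤ F j} := by
    obtain ⟨k0, hk0, hmin⟩ := Finset.exists_min_image (Finset.range (n+2)) F ⟨0, by simp⟩
    refine ⟨k0, ?_, fun j hj => hmin j ?_⟩
    · simp only [Finset.mem_range] at hk0; omega
    · simp only [Finset.mem_range]; omega
  have hSbdd : BddAbove {k | k ≤ n+1 ∧ ∀ j ≤ n+1, F k ≤ F j} :=
    ⟨n+1, fun k hk => hk.1⟩
  set R := sSup {k | k ≤ n+1 ∧ ∀ j ≤ n+1, F k ≤ F j} with hR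
  have hRS : R ≤ n+1 ∧ ∀ j ≤ n+1, F R ≤ F j := Nat.sSup_mem hSne hSbdd
  have hRmax : ∀ k, k ≤ n+1 → (∀ j ≤ n+1, F k ≤ F j) → k ≤ R :=
    fun k h1 h2 => le_csSup hSbdd ⟨h1, h2⟩
  have hRstrict : ∀ k, R < k → k ≤ n+1 → F R < F k := by
    intro k hRk hkn
    rcases lt_or_ge (F R) (F k) with h | h
    · exact h
    · exfalso
      exact absurd (hRmax k hkn (fun j hj => le_trans h (hRS.2 j hj))) (by omega)
  -- F values
  have hFr : F (cnt+1) = u - q * ((cnt:ℝ)+1) / ((n:ℝ)+1) := by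
    simp only [hF]; rw [hOx_r]; push_cast; ring
  have hFlow : ∀ k, k ≤ cnt → F k = V n q p k := by
    intro k hk
    simp only [hF, V]; rw [hOx_low k hk]
  have hFhigh : ∀ j, cnt+1 ≤ j → j ≤ n → F (j+1) = V n q p j - q / ((n:ℝ)+1) := by
    intro j h1 h2
    have hO := hOx_high (j+1) (by omega) (by omega)
    rw [show (j+1) - 1 = j by omega] at hO
    simp only [hF, V]
    rw [hO]; push_cast; ring
  have hqsplit : ∀ c : ℝ, q * (c+1)/((n:ℝ)+1) = q*c/((n:ℝ)+1) + q/((n:ℝ)+1) :=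
    fun c => by ring
  have hthr_eq : slThreshold (n+1) q x = orderStat (n+1) x R := by
    rw [slThreshold, hslc]
  constructor
  · -- forward
    intro hthr
    rw [hthr_eq] at hthr
    have hR1 : 1 ≤ R := by
      by_contra h
      push_neg at h
      interval_cases R
      · rw [orderStat_zero] at hthr; exact absurd hthr.symm (ne_of_gt hu0)
    have hReq : R = cnt + 1 := hOx_uniq R hR1 hRS.1 hthr
    refine ⟨cnt, hcntn, rfl, ?_, ?_⟩
    · intro k hk
      have := hRS.2 k (by omega)
      rw [hReq, hFr, hFlow k hk] at this
      linarith
    · intro j hj1 hj2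
      have := hRstrict (j+1) (by omega) (by omega)
      rw [hReq, hFr, hFhigh j (by omega) hj2] at this
      linarith [hqsplit (cnt:ℝ)]
  · -- backward
    rintro ⟨s, hsn, hcs, hlow, hhigh⟩
    have hcs' : cnt = s := hcs
    rw [← hcs'] at hlow hhigh hsn
    have hlt : ∀ j, cnt+1 < j → j ≤ n+1 → F (cnt+1) < F j := by
      intro j h hj
      have hj1 : cnt + 1 ≤ j - 1 := by omega
      have hj2 : j - 1 ≤ n := by omega
      have hFj : F j = V n q p (j-1) - q / ((n:ℝ)+1) := by
        have := hFhigh (j-1) (by omega) hj2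
        rw [show (j-1) + 1 = j by omega] at this
        exact this
      rw [hFr, hFj]
      have := hhigh (j-1) hj1 hj2
      linarith [hqsplit (cnt:ℝ)]
    have hsS : ∀ j ≤ n+1, F (cnt+1) ≤ F j := by
      intro j hj
      rcases lt_trichotomy j (cnt+1) with h | h | h
      · have hjs : j ≤ cnt := by omega
        rw [hFr, hFlow j hjs]
        have := hlow j hjs
        linarith
      · rw [h]
      · exact le_of_lt (hlt j h hj)
    have hRge : cnt + 1 ≤ R := hRmax _ (by omega) hsS
    have hReq : R = cnt + 1 := by
      rcases eq_or_lt_of_le hRge with h | h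
      · exact h.symm
      · exfalso
        have h1 := hlt R h hRS.1
        have h2 := hRS.2 (cnt+1) (by omega)
        linarith
    rw [hthr_eq, hReq]
    exact hOx_r


def eM (n : ℕ) (q : ℝ) (p : Fin n → ℝ) (s : ℕ) : ℝ :=
  (Finset.range (s+1)).inf' Finset.nonempty_range_add_one (V n q p)

def bM (n : ℕ) (q : ℝ) (p : Fin n → ℝ) (s : ℕ) : ℝ :=
  if h : s < n then (Finset.Icc (s+1) n).inf'
    (by rw [Finset.nonempty_Icc]; omega) (V n q p)
  else 1 - q + q/(n+1)

def tH (n : ℕ) (q : ℝ) (p : Fin n → ℝ) (s : ℕ) : ℝ :=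
  min (q/(n+1) + eM n q p s) (bM n q p s)

variable (hp : ∀ i, p i ∈ Set.Icc (0:ℝ) 1)

lemma orderStat_bounds (hp : ∀ i, p i ∈ Set.Icc (0:ℝ) 1) {j : ℕ} (h1 : 1 ≤ j) (h2 : j ≤ n) :
    orderStat n p j ∈ Set.Icc (0:ℝ) 1 := by
  obtain ⟨i, hi⟩ := orderStat_mem p h1 h2
  rw [hi]; exact hp i

lemma V_zero : V n q p 0 = 0 := by
  rw [V, orderStat_zero]; push_cast; ring

lemma V_n_le (hp : ∀ i, p i ∈ Set.Icc (0:ℝ) 1) (hq0 : 0 < q) :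
    V n q p n ≤ 1 - q + q/(n+1) := by
  rcases Nat.eq_zero_or_pos n with h0 | h1
  · subst h0
    rw [V_zero]
    norm_num
  · have h2 := (orderStat_bounds hp h1 le_rfl).2
    rw [V]
    have hn1 : ((n:ℝ)+1) ≠ 0 := by positivity
    have heq : q*(n:ℝ)/((n:ℝ)+1) = q - q/((n:ℝ)+1) := by field_simp; ring
    linarith

lemma tH_le_V (hq0 : 0 < q) {s s' : ℕ} (h : s < s') (h' : s' ≤ n) :
    tH n q p s ≤ V n q p s' := by
  have hsn : s < n := by omega
  calc tH n q p s ≤ bM n q p s := min_le_right _ _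
    _ ≤ V n q p s' := by
        rw [bM, dif_pos hsn]
        exact Finset.inf'_le _ (by simp only [Finset.mem_Icc]; omega)

lemma union_W (hp : ∀ i, p i ∈ Set.Icc (0:ℝ) 1) (hq0 : 0 < q) :
    ⋃ s ∈ Finset.range (n+1), Set.Ioc (V n q p s) (tH n q p s)
      = Set.Ioc (eM n q p n) (tH n q p n) := by
  ext w
  simp only [Set.mem_iUnion, Set.mem_Ioc, Finset.mem_range]
  constructor
  · rintro ⟨s, hs, hws, hwt⟩
    have hsn : s ≤ n := by omega
    constructor
    · exact lt_of_le_of_lt (Finset.inf'_le _ (by simp only [Finset.mem_range]; omega)) hws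
    · rcases Nat.eq_or_lt_of_le hsn with h | hlt
      · subst h; exact hwt
      · -- s < n
        have hw1 : w ≤ q/((n:ℝ)+1) + eM n q p s := le_trans hwt (min_le_left _ _)
        have hw2 : w ≤ bM n q p s := le_trans hwt (min_le_right _ _)
        rw [bM, dif_pos hlt] at hw2
        have hwVn : w ≤ V n q p n :=
          le_trans hw2 (Finset.inf'_le _ (by simp only [Finset.mem_Icc]; omega))
        have hsplit : eM n q p n = min (eM n q p s) ((Finset.Icc (s+1) n).inf'
            (by rw [Finset.nonempty_Icc]; omega) (V n q p)) := by
          rw [eM, eM, ← Finset.inf'_union]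
          · congr 1
            ext k
            simp only [Finset.mem_union, Finset.mem_range, Finset.mem_Icc]
            omega
        rw [tH]
        refine le_min ?_ ?_
        · rcases le_total (eM n q p s) ((Finset.Icc (s+1) n).inf' (by rw [Finset.nonempty_Icc]; omega) (V n q p)) with hc | hc
          · rw [hsplit, min_eq_left hc]; exact hw1
          · rw [hsplit, min_eq_right hc]
            have hq' : 0 < q/((n:ℝ)+1) := by positivity
            linarith
        · rw [bM, dif_neg (by omega)]
          exact le_trans hwVn (V_n_le hp hq0)
  · rintro ⟨hEw, hwT⟩
    have hKne : ∃ k ∈ Finset.range (n+1), V n q p k < w := by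
      have := lt_of_le_of_lt (le_refl (eM n q p n)) hEw
      rw [eM] at this
      exact (Finset.inf'_lt_iff _).mp this
    set K := (Finset.range (n+1)).filter (fun k => V n q p k < w) with hK
    have hKne' : K.Nonempty := by
      obtain ⟨k, h1, h2⟩ := hKne
      exact ⟨k, by simp only [hK, Finset.mem_filter]; exact ⟨h1, h2⟩⟩
    set s := K.max' hKne' with hs
    have hsK : s ∈ K := K.max'_mem hKne'
    have hsmax : ∀ k ∈ K, k ≤ s := fun k hk => K.le_max' k hk
    have hsn : s < n + 1 := by
      have := hsK; rw [hK] at this; simp only [Finset.mem_filter, Finset.mem_range] at this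
      exact this.1
    have hVs : V n q p s < w := by
      have := hsK; rw [hK] at this; simp only [Finset.mem_filter] at this
      exact this.2
    refine ⟨s, hsn, hVs, ?_⟩
    have hEs : eM n q p s = eM n q p n := by
      obtain ⟨k0, hk0mem, hk0⟩ := Finset.exists_mem_eq_inf' (Finset.nonempty_range_add_one
        (n := n)) (V n q p)
      have hk0K : k0 ∈ K := by
        rw [hK]; simp only [Finset.mem_filter]
        refine ⟨hk0mem, ?_⟩
        rw [← hk0, ← eM]; exact hEw
      have hk0s : k0 ≤ s := hsmax k0 hk0K
      apply le_antisymm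
      · calc eM n q p s ≤ V n q p k0 :=
            Finset.inf'_le _ (by simp only [Finset.mem_range]; omega)
          _ = eM n q p n := by rw [eM]; exact hk0.symm
      · apply Finset.le_inf'
        intro b hb
        apply Finset.inf'_le
        simp only [Finset.mem_range] at hb ⊢
        omega
    rw [tH]
    refine le_min ?_ ?_
    · rw [hEs]
      exact le_trans hwT (min_le_left _ _)
    · rw [bM]
      by_cases hcase : s < n
      · rw [dif_pos hcase]
        apply Finset.le_inf'
        intro j hj
        simp only [Finset.mem_Icc] at hj
        by_contra hc
        push_neg at hc
        have : j ∈ K := by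
          rw [hK]; simp only [Finset.mem_filter, Finset.mem_range]
          exact ⟨by omega, hc⟩
        have := hsmax j this
        omega
      · rw [dif_neg hcase]
        have hsn' : s = n := by omega
        calc w ≤ tH n q p n := hwT
          _ ≤ bM n q p n := min_le_right _ _
          _ = 1 - q + q/(n+1) := by rw [bM, dif_neg (lt_irrefl n)]


lemma pairwise_Ioc (n : ℕ) (f g : ℕ → ℝ) (h : ∀ a b, a < b → b ≤ n → g a ≤ f b) :
    (↑(Finset.range (n+1)) : Set ℕ).PairwiseDisjoint (fun s => Set.Ioc (f s) (g s)) := by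
  intro a ha b hb hab
  simp only [Finset.coe_range, Set.mem_Iio] at ha hb
  rcases hab.lt_or_gt with hlt | hlt
  · apply Set.disjoint_left.mpr
    intro u hua hub
    have := h a b hlt (by omega)
    simp only [Set.mem_Ioc] at hua hub
    linarith [hua.2, hub.1]
  · apply Set.disjoint_right.mpr
    intro u hua hub
    have := h b a hlt (by omega)
    simp only [Set.mem_Ioc] at hua hub
    linarith [hua.2, hub.1]

theorem stmt2aux (n : ℕ) (p : Fin n → ℝ) (hp : ∀ i, p i ∈ Set.Icc (0:ℝ) 1)
    (q : ℝ) (hq0 : 0 < q) :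
    (volume.restrict (Set.Icc 0 1)) {u | slThreshold (n + 1) q (Fin.snoc p u) = u}
        ≤ ENNReal.ofReal (q / (n + 1)) ∧
    (q ≤ 1 → (volume.restrict (Set.Icc 0 1)) {u | slThreshold (n + 1) q (Fin.snoc p u) = u}
        = ENNReal.ofReal (q / (n + 1))) := by
  classical
  have hm1 : (0:ℝ) < (n:ℝ)+1 := by positivity
  have hqm : 0 < q / ((n:ℝ)+1) := by positivity
  set Sev : Set ℝ := {u | slThreshold (n + 1) q (Fin.snoc p u) = u} with hSev
  set I : ℕ → Set ℝ :=
    fun s => Set.Ioc (orderStat n p s) (q*(s:ℝ)/((n:ℝ)+1) + tH n q p s) with hI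
  set W : ℕ → Set ℝ := fun s => Set.Ioc (V n q p s) (tH n q p s) with hW
  set Bad : Set ℝ := Set.range p ∪
    ↑((Finset.range (n+1)).image fun s : ℕ => q*(s:ℝ)/((n:ℝ)+1) + bM n q p s) ∪ {0} with hBad
  have hBadFin : Bad.Finite :=
    ((Set.finite_range p).union (Finset.finite_toSet _)).union (Set.finite_singleton 0)
  have hBadNull : volume Bad = 0 := hBadFin.measure_zero _
  have hP0 : ∀ s : ℕ, s ≤ n → 0 ≤ orderStat n p s := by
    intro s hs
    rcases Nat.eq_zero_or_pos s with h | h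
    · subst h; rw [orderStat_zero]
    · exact (orderStat_bounds hp h hs).1
  have hqsplit : ∀ c : ℝ, q * (c+1)/((n:ℝ)+1) = q*c/((n:ℝ)+1) + q/((n:ℝ)+1) :=
    fun c => by ring
  have hqn1 : q*(n:ℝ)/((n:ℝ)+1) + (1 - q + q/((n:ℝ)+1)) = 1 := by field_simp; ring
  have hmono : ∀ a b : ℕ, a ≤ b → q*(a:ℝ)/((n:ℝ)+1) ≤ q*(b:ℝ)/((n:ℝ)+1) := by
    intro a b hab
    have h1 : (a:ℝ) ≤ (b:ℝ) := by exact_mod_cast hab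
    rw [div_le_div_iff₀ hm1 hm1]
    have h2 : q*(a:ℝ) ≤ q*(b:ℝ) := mul_le_mul_of_nonneg_left h1 hq0.le
    exact mul_le_mul_of_nonneg_right h2 hm1.le
  -- upper bound of I s below next order statistics
  have htop : ∀ a b : ℕ, a < b → b ≤ n →
      q*(a:ℝ)/((n:ℝ)+1) + tH n q p a ≤ orderStat n p b := by
    intro a b hab hbn
    have h1 : tH n q p a ≤ V n q p b := tH_le_V hq0 hab hbn
    have h2 : V n q p b = orderStat n p b - q*(b:ℝ)/((n:ℝ)+1) := rfl
    have h3 := hmono a b hab.le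
    linarith
  -- the key set identity
  have hsetEq : (Sev ∩ Set.Icc 0 1) \ Bad = (⋃ s ∈ Finset.range (n+1), I s) \ Bad := by
    ext u
    simp only [Set.mem_diff, Set.mem_inter_iff, Set.mem_iUnion, Set.mem_Ioc, Finset.mem_range,
      hSev, Set.mem_setOf_eq, Set.mem_Icc, hI]
    constructor
    · rintro ⟨⟨hS, hu0, hu1⟩, hnb⟩
      refine ⟨?_, hnb⟩
      have hu0' : 0 < u := by
        rcases eq_or_lt_of_le hu0 with h | h
        · exact absurd (by rw [hBad]; simp [← h]) hnb
        · exact h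
      have hup : u ∉ Set.range p := fun hmem => hnb (by rw [hBad]; left; left; exact hmem)
      obtain ⟨s, hsn, hcnt, hlow, hhigh⟩ := (mainChar hq0 hu0' hu1 hup).mp hS
      refine ⟨s, by omega, ?_, ?_⟩
      · -- orderStat n p s < u
        rcases Nat.eq_zero_or_pos s with h | h
        · subst h; rw [orderStat_zero]; exact hu0'
        · rw [orderStat_lt_iff p h hsn, hcnt]
      · -- u ≤ q s/(n+1) + tH s
        have hgoal : u - q*(s:ℝ)/((n:ℝ)+1) ≤ tH n q p s := by
          rw [tH]
          apply le_min
          · have hle : u - q * ((s:ℝ)+1)/((n:ℝ)+1) ≤ eM n q p s := by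
              apply Finset.le_inf'
              intro k hk
              simp only [Finset.mem_range] at hk
              have := hlow k (by omega)
              push_cast at this ⊢
              linarith
            have := hqsplit (s:ℝ)
            linarith
          · rw [bM]
            by_cases hcase : s < n
            · rw [dif_pos hcase]
              apply Finset.le_inf'
              intro j hj
              simp only [Finset.mem_Icc] at hj
              have := hhigh j hj.1 hj.2
              linarith
            · rw [dif_neg hcase]
              have hs' : s = n := by omega
              rw [hs']
              linarith
        linarith
    · rintro ⟨⟨s, hsn1, hlo, hhi⟩, hnb⟩
      have hsn : s ≤ n := by omega
      refine ⟨⟨?_, ?_, ?_⟩, hnb⟩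
      rotate_left
      · -- 0 ≤ u
        exact le_of_lt (lt_of_le_of_lt (hP0 s hsn) hlo)
      · -- u ≤ 1
        rcases Nat.lt_or_ge s n with hcase | hcase
        · have h1 : tH n q p s ≤ V n q p n := tH_le_V hq0 hcase le_rfl
          have h2 := V_n_le hp hq0
          have h3 := hmono s n hcase.le
          linarith
        · have hs' : s = n := by omega
          rw [hs'] at hhi
          have h1 : tH n q p n ≤ 1 - q + q/((n:ℝ)+1) := by
            rw [tH, bM, dif_neg (lt_irrefl n)]
            exact min_le_right _ _
          linarith
      · -- the event: via mainChar
        have hu0' : 0 < u := lt_of_le_of_lt (hP0 s hsn) hlo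
        have hu1' : u ≤ 1 := by
          rcases Nat.lt_or_ge s n with hcase | hcase
          · have h1 : tH n q p s ≤ V n q p n := tH_le_V hq0 hcase le_rfl
            have h2 := V_n_le hp hq0
            have h3 := hmono s n hcase.le
            linarith
          · have hs' : s = n := by omega
            rw [hs'] at hhi
            have h1 : tH n q p n ≤ 1 - q + q/((n:ℝ)+1) := by
              rw [tH, bM, dif_neg (lt_irrefl n)]
              exact min_le_right _ _
            linarith
        have hup : u ∉ Set.range p := fun hmem => hnb (by rw [hBad]; left; left; exact hmem)
        apply (mainChar hq0 hu0' hu1' hup).mpr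
        have hhi1 : u ≤ q*(s:ℝ)/((n:ℝ)+1) + (q/((n:ℝ)+1) + eM n q p s) :=
          le_trans hhi (by rw [tH]; linarith [min_le_left (q/((n:ℝ)+1) + eM n q p s) (bM n q p s)])
        have hhi2 : u ≤ q*(s:ℝ)/((n:ℝ)+1) + bM n q p s :=
          le_trans hhi (by rw [tH]; linarith [min_le_right (q/((n:ℝ)+1) + eM n q p s) (bM n q p s)])
        have hnbb : u ≠ q*(s:ℝ)/((n:ℝ)+1) + bM n q p s := by
          intro heq
          apply hnb
          rw [hBad]
          left; right
          simp only [Finset.coe_image, Set.mem_image, Finset.mem_coe, Finset.mem_range]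
          exact ⟨s, by simpa using hsn1, heq.symm⟩
        have hhi2' : u < q*(s:ℝ)/((n:ℝ)+1) + bM n q p s := lt_of_le_of_ne hhi2 hnbb
        have hcnt : ((Finset.univ : Finset (Fin n)).filter fun i => p i < u).card = s := by
          apply le_antisymm
          · -- cnt ≤ s
            by_contra hc
            push_neg at hc
            rcases Nat.lt_or_ge s n with hcase | hcase
            · have hPs1 : orderStat n p (s+1) < u := by
                rw [orderStat_lt_iff p (by omega) (by omega)]
                omega
              have : bM n q p s ≤ V n q p (s+1) := by
                rw [bM, dif_pos hcase]
                exact Finset.inf'_le _ (by simp only [Finset.mem_Icc]; omega)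
              have hV : V n q p (s+1) = orderStat n p (s+1) - q*((s:ℝ)+1)/((n:ℝ)+1) := by
                rw [V]; push_cast; ring
              have := hqsplit (s:ℝ)
              linarith
            · have : ((Finset.univ : Finset (Fin n)).filter fun i => p i < u).card ≤ n := by
                calc _ ≤ (Finset.univ : Finset (Fin n)).card := Finset.card_filter_le _ _
                  _ = n := by simp
              omega
          · -- s ≤ cnt
            rcases Nat.eq_zero_or_pos s with h | h
            · omega
            · rw [← orderStat_lt_iff p h hsn]
              exact hlo
        refine ⟨s, hsn, hcnt, ?_, ?_⟩
        · intro k hk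
          have h1 : eM n q p s ≤ V n q p k :=
            Finset.inf'_le _ (by simp only [Finset.mem_range]; omega)
          have := hqsplit (s:ℝ)
          push_cast
          linarith
        · intro j hj1 hj2
          have hcase : s < n := by omega
          have h1 : bM n q p s ≤ V n q p j := by
            rw [bM, dif_pos hcase]
            exact Finset.inf'_le _ (by simp only [Finset.mem_Icc]; omega)
          linarith
  -- measure computation
  have hWvol : ∀ s, volume (I s) = volume (W s) := by
    intro s
    rw [hI, hW, Real.volume_Ioc, Real.volume_Ioc]
    congr 1
    rw [V]
    ring
  have hIpd : (↑(Finset.range (n+1)) : Set ℕ).PairwiseDisjoint I := by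
    apply pairwise_Ioc
    exact htop
  have hWpd : (↑(Finset.range (n+1)) : Set ℕ).PairwiseDisjoint W := by
    apply pairwise_Ioc
    intro a b hab hbn
    exact tH_le_V hq0 hab hbn
  have key : (volume.restrict (Set.Icc 0 1)) Sev
      = ENNReal.ofReal (tH n q p n - eM n q p n) := by
    rw [Measure.restrict_apply' measurableSet_Icc]
    calc volume (Sev ∩ Set.Icc 0 1)
        = volume ((Sev ∩ Set.Icc 0 1) \ Bad) := (measure_diff_null hBadNull).symm
      _ = volume ((⋃ s ∈ Finset.range (n+1), I s) \ Bad) := by rw [hsetEq]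
      _ = volume (⋃ s ∈ Finset.range (n+1), I s) := measure_diff_null hBadNull
      _ = ∑ s ∈ Finset.range (n+1), volume (I s) :=
          measure_biUnion_finset hIpd (fun b _ => by rw [hI]; exact measurableSet_Ioc)
      _ = ∑ s ∈ Finset.range (n+1), volume (W s) := by
          apply Finset.sum_congr rfl
          intro s _
          exact hWvol s
      _ = volume (⋃ s ∈ Finset.range (n+1), W s) :=
          (measure_biUnion_finset hWpd (fun b _ => by rw [hW]; exact measurableSet_Ioc)).symm
      _ = volume (Set.Ioc (eM n q p n) (tH n q p n)) := by
          rw [hW]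
          rw [union_W hp hq0]
      _ = ENNReal.ofReal (tH n q p n - eM n q p n) := Real.volume_Ioc
  constructor
  · rw [key]
    apply ENNReal.ofReal_le_ofReal
    have := min_le_left (q/((n:ℝ)+1) + eM n q p n) (bM n q p n)
    rw [← tH] at this
    have hcast : ((n:ℝ)+1) = ((n+1 : ℕ) : ℝ) := by push_cast; ring
    push_cast
    linarith
  · intro hq1
    rw [key]
    congr 1
    have hE0 : eM n q p n ≤ 0 := by
      have := Finset.inf'_le (V n q p) (s := Finset.range (n+1)) (b := 0)
        (by simp only [Finset.mem_range]; omega)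
      rw [V_zero] at this
      exact this
    have : tH n q p n = q/((n:ℝ)+1) + eM n q p n := by
      rw [tH, bM, dif_neg (lt_irrefl n)]
      apply min_eq_left
      linarith
    rw [this]
    push_cast
    ring

end SL

/-- Fix `p_1, …, p_{m-1} ∈ [0,1]` (here `n = m - 1` fixed values) and let
`p_m ~ Unif(0,1)`. Running the SL procedure at level `q > 0` on `p_1, …, p_m`, the
probability that `p_m` is the last rejection, i.e. that `p_(R_q) = p_m`, is at most
`q/m`, with equality whenever `q ≤ 1`. -/
theorem stmt2 (n : ℕ) (p : Fin n → ℝ) (hp : ∀ i, p i ∈ Set.Icc (0:ℝ) 1)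
    (q : ℝ) (hq0 : 0 < q) :
    uniform01 {u | slThreshold (n + 1) q (Fin.snoc p u) = u}
        ≤ ENNReal.ofReal (q / (n + 1)) ∧
    (q ≤ 1 → uniform01 {u | slThreshold (n + 1) q (Fin.snoc p u) = u}
        = ENNReal.ofReal (q / (n + 1))) := by
  rw [uniform01]
  exact SL.stmt2aux n p hp q hq0
end
end

section
/- Fix p_1,…,p_{m−1} ∈ [0,1], let q ≤ 1, and let p_m be drawn from a density f0 on [0,1] satisfying f0(t) ≤ 1 for all t ∈ [0,q]. Running the SL procedure at level q on p_1,…,p_m, we have P{p_(R_q) = p_m} ≤ q/m. -/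
open MeasureTheory ProbabilityTheory Filter

noncomputable section

/-! Fix the other `p`-values with order statistics `s_j` and put `m = n + 1`. If `u = p_m` is
the SL threshold and has rank `k ≥ 1`, then `s_{k-1} ≤ u`, and `u - qk/m` is at most the SL
objective at every other rank, which only involves the `s_j`. So `u - qk/m` lies in an interval
`[a_k, b_k]` determined by `p` alone. These intervals are ordered (`b_j ≤ a_k` for `j < k`) and
fit in a window of width `q/m` (`b_k ≤ a_j + q/m` for `j ≤ k`), so their total length is at most
`q/m`. Translated back they lie in `[0, q]`, where `f0 ≤ 1`, so their probability is at most
their total length. -/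

lemma sum_max_sub_le_or_exists {a b : ℕ → ℝ} {m : ℕ}
    (hsep : ∀ j k, 1 ≤ j → j < k → k ≤ m → b j ≤ a k) {K : ℕ} (hK : K ≤ m) :
    ∑ k ∈ Finset.Icc 1 K, max 0 (b k - a k) ≤ 0 ∨
      ∃ i j, 1 ≤ i ∧ i ≤ j ∧ j ≤ K ∧ ∑ k ∈ Finset.Icc 1 K, max 0 (b k - a k) ≤ b j - a i := by
  induction K with
  | zero => simp
  | succ K ih =>
    rw [Finset.sum_Icc_succ_top (by omega)]
    rcases le_or_gt (b (K + 1)) (a (K + 1)) with hle | hlt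
    · rw [max_eq_left (by linarith), add_zero]
      exact (ih (by omega)).imp_right fun ⟨i, j, hi, hij, hj, hsum⟩ =>
        ⟨i, j, hi, hij, by omega, hsum⟩
    · rw [max_eq_right (sub_nonneg.mpr hlt.le)]
      right
      rcases ih (by omega) with hsum | ⟨i, j, hi, hij, hj, hsum⟩
      · exact ⟨K + 1, K + 1, by omega, le_rfl, le_rfl, by linarith⟩
      · have := hsep j (K + 1) (hi.trans hij) (by omega) hK
        exact ⟨i, K + 1, hi, by omega, le_rfl, by linarith⟩

lemma sum_max_sub_le_of_chain {a b : ℕ → ℝ} {m : ℕ} {c : ℝ} (hc : 0 ≤ c)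
    (hsep : ∀ j k, 1 ≤ j → j < k → k ≤ m → b j ≤ a k)
    (hwin : ∀ j k, 1 ≤ j → j ≤ k → k ≤ m → b k ≤ c + a j) :
    ∑ k ∈ Finset.Icc 1 m, max 0 (b k - a k) ≤ c := by
  rcases sum_max_sub_le_or_exists hsep le_rfl with hsum | ⟨i, j, hi, hij, hj, hsum⟩
  · linarith
  · linarith [hwin i j hi hij hj]

lemma withDensity_apply_le_of_le_one {α : Type*} [MeasurableSpace α] (μ : Measure α)
    {f : α → ENNReal} {s : Set α} (hs : MeasurableSet s) (hf : ∀ x ∈ s, f x ≤ 1) :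
    μ.withDensity f s ≤ μ s :=
  calc μ.withDensity f s = ∫⁻ x in s, f x ∂μ := withDensity_apply f hs
    _ ≤ ∫⁻ _ in s, 1 ∂μ := setLIntegral_mono measurable_const hf
    _ = μ s := setLIntegral_one s

lemma uniform01_Iic_zero : uniform01 (Set.Iic 0) = 0 := by
  rw [uniform01, Measure.restrict_apply measurableSet_Iic]
  exact measure_mono_null (fun t ⟨h0, h1, _⟩ => le_antisymm h0 h1) Real.volume_singleton

section OrderStatistics

open Finset

variable {n : ℕ} (p : Fin n → ℝ)

lemma orderStat_zero : orderStat n p 0 = 0 :=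
  dif_neg (by omega)

lemma orderStat_nonneg (hp : ∀ i, 0 ≤ p i) (k : ℕ) : 0 ≤ orderStat n p k := by
  unfold orderStat
  split
  · exact hp _
  · exact le_rfl

lemma orderStat_le_iff {k : ℕ} (hk1 : 1 ≤ k) (hk : k ≤ n) (c : ℝ) :
    orderStat n p k ≤ c ↔ k ≤ #{i | p i ≤ c} := by
  have hsort : #{i | p (Tuple.sort p i) ≤ c} = #{i | p i ≤ c} :=
    card_equiv (Tuple.sort p) (by simp)
  have h := Tuple.lt_card_le_iff_apply_le_of_monotone (j := ⟨k - 1, by omega⟩) (a := c)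
    (Tuple.monotone_sort p)
  rw [Function.comp_def, hsort] at h
  rw [orderStat, dif_pos ⟨hk1, hk⟩, ← h]
  change k - 1 < _ ↔ _
  omega

lemma le_card_of_orderStat_le {k : ℕ} (hk : k ≤ n) {c : ℝ} (h : orderStat n p k ≤ c) :
    k ≤ #{i | p i ≤ c} := by
  rcases Nat.eq_zero_or_pos k with rfl | hk1
  · exact Nat.zero_le _
  · exact (orderStat_le_iff p hk1 hk c).mp h

lemma orderStat_mono {i j : ℕ} (hi : 1 ≤ i) (hij : i ≤ j) (hj : j ≤ n) :
    orderStat n p i ≤ orderStat n p j :=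
  (orderStat_le_iff p hi (hij.trans hj) _).mpr
    (hij.trans (le_card_of_orderStat_le p hj le_rfl))

lemma card_filter_snoc_le (u c : ℝ) :
    #{i | (Fin.snoc p u : Fin (n + 1) → ℝ) i ≤ c} = #{i | p i ≤ c} + if u ≤ c then 1 else 0 := by
  rw [card_filter, card_filter, Fin.sum_univ_castSucc]
  simp

variable (u : ℝ)

lemma orderStat_snoc_le {j : ℕ} (hj : j ≤ n) :
    orderStat (n + 1) (Fin.snoc p u) j ≤ orderStat n p j := by
  rcases Nat.eq_zero_or_pos j with rfl | hj1
  · rw [orderStat_zero, orderStat_zero]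
  · rw [orderStat_le_iff _ hj1 (by omega), card_filter_snoc_le]
    have := le_card_of_orderStat_le p hj le_rfl
    omega

lemma orderStat_snoc_le_max {j : ℕ} (hj1 : 1 ≤ j) (hj : j ≤ n + 1) :
    orderStat (n + 1) (Fin.snoc p u) j ≤ max (orderStat n p (j - 1)) u := by
  rw [orderStat_le_iff _ hj1 hj, card_filter_snoc_le, if_pos (le_max_right _ _)]
  have := le_card_of_orderStat_le p (by omega : j - 1 ≤ n) (le_max_left _ u)
  omega

lemma orderStat_le_orderStat_snoc_succ {j : ℕ} (hj1 : 1 ≤ j) (hj : j ≤ n) :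
    orderStat n p j ≤ orderStat (n + 1) (Fin.snoc p u) (j + 1) := by
  rw [orderStat_le_iff p hj1 hj]
  have := le_card_of_orderStat_le (Fin.snoc p u : Fin (n + 1) → ℝ) (by omega : j + 1 ≤ n + 1)
    le_rfl
  rw [card_filter_snoc_le] at this
  split_ifs at this <;> omega

end OrderStatistics

section SL

variable (m : ℕ) (q : ℝ) (x : Fin m → ℝ)

lemma slCount_mem : slCount m q x ∈ {k | k ≤ m ∧ ∀ j ≤ m,
    orderStat m x k - q * k / m ≤ orderStat m x j - q * j / m} := by
  refine Nat.sSup_mem ?_ ⟨m, fun k hk => hk.1⟩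
  obtain ⟨k, hk, hmin⟩ := (Finset.range (m + 1)).exists_min_image
    (fun j => orderStat m x j - q * j / m) ⟨0, by simp⟩
  exact ⟨k, Nat.lt_succ_iff.mp (Finset.mem_range.mp hk),
    fun j hj => hmin j (Finset.mem_range.mpr (Nat.lt_succ_of_le hj))⟩

lemma slCount_le : slCount m q x ≤ m :=
  (slCount_mem m q x).1

lemma orderStat_slCount_sub_le {j : ℕ} (hj : j ≤ m) :
    orderStat m x (slCount m q x) - q * slCount m q x / m ≤ orderStat m x j - q * j / m :=
  (slCount_mem m q x).2 j hj

end SL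

section RankIntervals

variable (n : ℕ) (q : ℝ) (p : Fin n → ℝ)

/-- If `p_m` has rank `k` and is the SL threshold, then `p_m - qk/m` lies in
`[lowerEnd k, upperEnd k]`. For a rank `j` above that of `p_m` the SL objective at `j` is
`lowerEnd j`; for `j` below or equal, the objective at `j - 1` is `q/m + lowerEnd j`. -/
def lowerEnd (k : ℕ) : ℝ :=
  orderStat n p (k - 1) - q * k / (n + 1 : ℕ)

def upperEnd (k : ℕ) : ℝ :=
  (Finset.Icc 1 (n + 1)).inf' ⟨1, by simp⟩
    fun j => if j ≤ k then q / (n + 1 : ℕ) + lowerEnd n q p j else lowerEnd n q p j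

def rankInterval (k : ℕ) : Set ℝ :=
  Set.Icc (orderStat n p (k - 1)) (q * k / (n + 1 : ℕ) + upperEnd n q p k)

lemma upperEnd_le {j : ℕ} (hj1 : 1 ≤ j) (hj : j ≤ n + 1) (k : ℕ) :
    upperEnd n q p k ≤ if j ≤ k then q / (n + 1 : ℕ) + lowerEnd n q p j else lowerEnd n q p j :=
  Finset.inf'_le _ (Finset.mem_Icc.mpr ⟨hj1, hj⟩)

lemma upperEnd_le_lowerEnd {j k : ℕ} (hjk : j < k) (hk : k ≤ n + 1) :
    upperEnd n q p j ≤ lowerEnd n q p k := by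
  simpa [if_neg (show ¬k ≤ j by omega)] using upperEnd_le n q p (by omega) hk j

lemma upperEnd_le_add_lowerEnd {j k : ℕ} (hj : 1 ≤ j) (hjk : j ≤ k) (hk : k ≤ n + 1) :
    upperEnd n q p k ≤ q / (n + 1 : ℕ) + lowerEnd n q p j := by
  simpa [if_pos hjk] using upperEnd_le n q p hj (hjk.trans hk) k

lemma upperEnd_nonpos {k : ℕ} (hk1 : 1 ≤ k) (hk : k ≤ n + 1) : upperEnd n q p k ≤ 0 := by
  simpa [lowerEnd, orderStat_zero] using upperEnd_le_add_lowerEnd n q p le_rfl hk1 hk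

lemma rankInterval_subset_Icc (hp : ∀ i, 0 ≤ p i) (hq : 0 ≤ q) {k : ℕ} (hk1 : 1 ≤ k)
    (hk : k ≤ n + 1) : rankInterval n q p k ⊆ Set.Icc 0 q := by
  have hqk : q * k / (n + 1 : ℕ) ≤ q :=
    div_le_of_le_mul₀ (by positivity) hq (mul_le_mul_of_nonneg_left (by exact_mod_cast hk) hq)
  exact Set.Icc_subset_Icc (orderStat_nonneg p hp _)
    (by linarith [upperEnd_nonpos n q p hk1 hk])

lemma volume_rankInterval (k : ℕ) :
    volume (rankInterval n q p k) = ENNReal.ofReal (upperEnd n q p k - lowerEnd n q p k) := by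
  rw [rankInterval, Real.volume_Icc, lowerEnd]
  ring_nf

lemma sub_le_upperEnd {u : ℝ} (hτ : slThreshold (n + 1) q (Fin.snoc p u) = u)
    (hk : 1 ≤ slCount (n + 1) q (Fin.snoc p u)) :
    u - q * slCount (n + 1) q (Fin.snoc p u) / (n + 1 : ℕ)
      ≤ upperEnd n q p (slCount (n + 1) q (Fin.snoc p u)) := by
  set x : Fin (n + 1) → ℝ := Fin.snoc p u
  set k := slCount (n + 1) q x
  have hkm : k ≤ n + 1 := slCount_le (n + 1) q x
  change orderStat (n + 1) x k = u at hτ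
  refine Finset.le_inf' _ _ fun j hj => ?_
  obtain ⟨hj1, hjm⟩ := Finset.mem_Icc.mp hj
  split_ifs with hjk
  · have hmin := orderStat_slCount_sub_le (n + 1) q x (j := j - 1) (by omega)
    have hx := orderStat_snoc_le p u (j := j - 1) (by omega)
    have hshift :
        q * ((j - 1 : ℕ) : ℝ) / (n + 1 : ℕ) = q * j / (n + 1 : ℕ) - q / (n + 1 : ℕ) := by
      rw [Nat.cast_sub hj1]
      ring
    rw [hτ, hshift] at hmin
    unfold lowerEnd
    linarith
  · have hmin := orderStat_slCount_sub_le (n + 1) q x hjm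
    have hu : u ≤ orderStat n p (j - 1) :=
      hτ ▸ (orderStat_snoc_le p u (by omega)).trans (orderStat_mono p hk (by omega) (by omega))
    have hx := (orderStat_snoc_le_max p u hj1 hjm).trans_eq (max_eq_left hu)
    rw [hτ] at hmin
    unfold lowerEnd
    linarith

lemma exists_mem_rankInterval {u : ℝ} (hτ : slThreshold (n + 1) q (Fin.snoc p u) = u)
    (hu : 0 < u) :
    ∃ k ∈ Finset.Icc 1 (n + 1), u ∈ rankInterval n q p k := by
  set x : Fin (n + 1) → ℝ := Fin.snoc p u
  set k := slCount (n + 1) q x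
  have hkm : k ≤ n + 1 := slCount_le (n + 1) q x
  have hτk : orderStat (n + 1) x k = u := hτ
  have hk : 1 ≤ k := Nat.one_le_iff_ne_zero.mpr fun hk0 => hu.ne' <| by
    rw [← hτk, hk0, orderStat_zero]
  refine ⟨k, Finset.mem_Icc.mpr ⟨hk, hkm⟩, ?_, ?_⟩
  · rcases Nat.lt_or_ge k 2 with hk1 | hk2
    · rw [show k - 1 = 0 by omega, orderStat_zero]
      exact hu.le
    · have := orderStat_le_orderStat_snoc_succ p u (j := k - 1) (by omega) (by omega)
      rw [Nat.sub_add_cancel hk] at this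
      exact this.trans_eq hτk
  · linarith [sub_le_upperEnd n q p hτ hk]

lemma sum_ofReal_upperEnd_sub_lowerEnd_le (hq : 0 ≤ q) :
    ∑ k ∈ Finset.Icc 1 (n + 1), ENNReal.ofReal (upperEnd n q p k - lowerEnd n q p k)
      ≤ ENNReal.ofReal (q / (n + 1 : ℕ)) :=
  calc ∑ k ∈ Finset.Icc 1 (n + 1), ENNReal.ofReal (upperEnd n q p k - lowerEnd n q p k)
      ≤ ∑ k ∈ Finset.Icc 1 (n + 1), ENNReal.ofReal (max 0 (upperEnd n q p k - lowerEnd n q p k)) :=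
        Finset.sum_le_sum fun _ _ => ENNReal.ofReal_le_ofReal (le_max_right _ _)
    _ = ENNReal.ofReal (∑ k ∈ Finset.Icc 1 (n + 1), max 0 (upperEnd n q p k - lowerEnd n q p k)) :=
        (ENNReal.ofReal_sum_of_nonneg fun _ _ => le_max_left _ _).symm
    _ ≤ ENNReal.ofReal (q / (n + 1 : ℕ)) :=
        ENNReal.ofReal_le_ofReal <| sum_max_sub_le_of_chain (by positivity)
          (fun _ _ _ => upperEnd_le_lowerEnd n q p) (fun _ _ => upperEnd_le_add_lowerEnd n q p)

lemma withDensity_rankInterval_le (hp : ∀ i, 0 ≤ p i) (hq : 0 ≤ q) {f0 : ℝ → ℝ}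
    (hf0le : ∀ t ∈ Set.Icc 0 q, f0 t ≤ 1) {k : ℕ} (hk1 : 1 ≤ k) (hk : k ≤ n + 1) :
    uniform01.withDensity (fun t => ENNReal.ofReal (f0 t)) (rankInterval n q p k)
      ≤ ENNReal.ofReal (upperEnd n q p k - lowerEnd n q p k) :=
  calc uniform01.withDensity (fun t => ENNReal.ofReal (f0 t)) (rankInterval n q p k)
      ≤ uniform01 (rankInterval n q p k) :=
        withDensity_apply_le_of_le_one _ measurableSet_Icc fun t ht =>
          ENNReal.ofReal_le_one.mpr (hf0le t (rankInterval_subset_Icc n q p hp hq hk1 hk ht))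
    _ ≤ volume (rankInterval n q p k) := Measure.restrict_le_self _
    _ = ENNReal.ofReal (upperEnd n q p k - lowerEnd n q p k) := volume_rankInterval n q p k

end RankIntervals

theorem stmt3_general (n : ℕ) (p : Fin n → ℝ) (hp : ∀ i, p i ∈ Set.Icc (0:ℝ) 1)
    (q : ℝ) (hq0 : 0 < q)
    (f0 : ℝ → ℝ)
    (hf0le : ∀ t ∈ Set.Icc 0 q, f0 t ≤ 1) :
    (uniform01.withDensity fun t => ENNReal.ofReal (f0 t))
        {u | slThreshold (n + 1) q (Fin.snoc p u) = u}
      ≤ ENNReal.ofReal (q / (n + 1)) := by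
  set μ := uniform01.withDensity fun t => ENNReal.ofReal (f0 t)
  have hcover : {u | slThreshold (n + 1) q (Fin.snoc p u) = u}
      ⊆ Set.Iic 0 ∪ ⋃ k ∈ Finset.Icc 1 (n + 1), rankInterval n q p k := fun u hτ =>
    (le_or_gt u 0).imp id fun hu =>
      let ⟨_, hk, huk⟩ := exists_mem_rankInterval n q p hτ hu
      Set.mem_iUnion₂_of_mem hk huk
  have hnull : μ (Set.Iic 0) = 0 := withDensity_absolutelyContinuous _ _ uniform01_Iic_zero
  calc μ {u | slThreshold (n + 1) q (Fin.snoc p u) = u}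
      ≤ μ (Set.Iic 0) + μ (⋃ k ∈ Finset.Icc 1 (n + 1), rankInterval n q p k) :=
        (measure_mono hcover).trans (measure_union_le _ _)
    _ ≤ ∑ k ∈ Finset.Icc 1 (n + 1), μ (rankInterval n q p k) := by
        rw [hnull, zero_add]
        exact measure_biUnion_finset_le _ _
    _ ≤ ∑ k ∈ Finset.Icc 1 (n + 1), ENNReal.ofReal (upperEnd n q p k - lowerEnd n q p k) :=
        Finset.sum_le_sum fun k hk => withDensity_rankInterval_le n q p (fun i => (hp i).1) hq0.le
          hf0le (Finset.mem_Icc.mp hk).1 (Finset.mem_Icc.mp hk).2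
    _ ≤ ENNReal.ofReal (q / (n + 1)) := by
        exact_mod_cast sum_ofReal_upperEnd_sub_lowerEnd_le n q p hq0.le

/-- Fix `p_1, …, p_{m-1} ∈ [0,1]` (here `n = m - 1` fixed values), let
`q ≤ 1`, and let `p_m` be drawn from a density `f0` on `[0,1]` satisfying `f0(t) ≤ 1`
for all `t ∈ [0,q]`. Running the SL procedure at level `q`, the probability that
`p_(R_q) = p_m` is at most `q/m`. -/
theorem stmt3 (n : ℕ) (p : Fin n → ℝ) (hp : ∀ i, p i ∈ Set.Icc (0:ℝ) 1)
    (q : ℝ) (hq0 : 0 < q) (hq1 : q ≤ 1)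
    (f0 : ℝ → ℝ) (hf0m : Measurable f0) (hf0nn : ∀ t, 0 ≤ f0 t)
    (hf0int : ∫ t in Set.Icc (0:ℝ) 1, f0 t = 1)
    (hf0le : ∀ t ∈ Set.Icc 0 q, f0 t ≤ 1) :
    (uniform01.withDensity fun t => ENNReal.ofReal (f0 t))
        {u | slThreshold (n + 1) q (Fin.snoc p u) = u}
      ≤ ENNReal.ofReal (q / (n + 1)) :=
  stmt3_general n p hp q hq0 f0 hf0le
end
end

section
/- Under the two-groups model, let R = R(p_1,…,p_m) ∈ {0,1,…,m} be any measurable function of the p-values, and suppose the R hypotheses with the smallest p-values are rejected. Then P{H_(R) = 0 and R > 0} = E[lfdr(p_(R))·1{R > 0}], where H_(R) is the hypothesis indicator paired with the largest rejected p-value p_(R). -/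
/-!
Split the event according to the index `i` of the last rejected hypothesis. The set of `p`-value
vectors for which this index is `i` is measurable, so the `i`-th term is
`P{p ∈ B, H_i = 0}` for a measurable `B`. Integrating out the `i`-th pair first, with the other
pairs fixed, this becomes `E[1{H = 0} g(p)]` for a single pair and a measurable `g`. Both
`E[1{H = 0} g(p)]` and `E[lfdr(p) g(p)]` equal `π0 ∫ g` over `[0,1]`, because `p` has density
`f = π0 + (1 - π0) f1` and `lfdr · f = π0`. Summing over `i` gives the claim.
-/

open MeasureTheory ProbabilityTheory Filter

noncomputable section

open scoped ENNReal

theorem lintegral_pi_mul_comp_eq {ι α β : Type*} [Fintype ι] [DecidableEq ι]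
    [MeasurableSpace α] [MeasurableSpace β] (μ : ι → Measure α) [∀ i, SigmaFinite (μ i)]
    {π : α → β} (hπ : Measurable π) {φ ψ : α → ℝ≥0∞} (hφ : Measurable φ) (hψ : Measurable ψ)
    (i : ι)
    (h : ∀ g : β → ℝ≥0∞, Measurable g →
      ∫⁻ y, φ y * g (π y) ∂μ i = ∫⁻ y, ψ y * g (π y) ∂μ i)
    {F : (ι → β) → ℝ≥0∞} (hF : Measurable F) :
    ∫⁻ x, φ (x i) * F (π ∘ x) ∂Measure.pi μ = ∫⁻ x, ψ (x i) * F (π ∘ x) ∂Measure.pi μ := by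
  have hFπ : Measurable fun x : ι → α => F (π ∘ x) :=
    hF.comp (measurable_pi_lambda _ fun j => hπ.comp (measurable_pi_apply j))
  refine lintegral_eq_of_lmarginal_eq {i} ((hφ.comp (measurable_pi_apply i)).mul hFπ)
    ((hψ.comp (measurable_pi_apply i)).mul hFπ) ?_
  ext x
  simp only [lmarginal_singleton, Function.update_self, Function.comp_update]
  exact h _ (hF.comp (measurable_update _))

section TupleSort

variable {α : Type*} [LinearOrder α] [MeasurableSpace α] [TopologicalSpace α]
  [OrderClosedTopology α] [SecondCountableTopology α] [OpensMeasurableSpace α] {n : ℕ}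

lemma measurableSet_sort_eq (σ : Equiv.Perm (Fin n)) :
    MeasurableSet {p : Fin n → α | Tuple.sort p = σ} := by
  simp_rw [eq_comm (a := Tuple.sort _), Tuple.eq_sort_iff, Monotone, le_antisymm_iff]
  measurability

lemma measurableSet_sort_apply_eq (j i : Fin n) :
    MeasurableSet {p : Fin n → α | Tuple.sort p j = i} := by
  have : {p : Fin n → α | Tuple.sort p j = i}
      = ⋃ (σ : Equiv.Perm (Fin n)) (_ : σ j = i), {p | Tuple.sort p = σ} := by
    ext p; simp
  rw [this]
  exact .iUnion fun σ => .iUnion fun _ => measurableSet_sort_eq σ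

end TupleSort

section LastRejection

variable {m : ℕ} {R : (Fin m → ℝ) → ℕ}

def lastRejAt (m : ℕ) (R : (Fin m → ℝ) → ℕ) (i : Fin m) : Set (Fin m → ℝ) :=
  {p | ∃ j : Fin m, R p = j + 1 ∧ Tuple.sort p j = i}

lemma measurableSet_lastRejAt (hR : Measurable R) (i : Fin m) :
    MeasurableSet (lastRejAt m R i) := by
  have : lastRejAt m R i = ⋃ j : Fin m, R ⁻¹' {(j : ℕ) + 1} ∩ {p | Tuple.sort p j = i} := by
    ext p; simp [lastRejAt]
  rw [this]
  exact .iUnion fun j => (hR (measurableSet_singleton _)).inter (measurableSet_sort_apply_eq j i)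

lemma eq_of_mem_lastRejAt {p : Fin m → ℝ} {i i' : Fin m} (h : p ∈ lastRejAt m R i)
    (h' : p ∈ lastRejAt m R i') : i = i' := by
  obtain ⟨j, hj, rfl⟩ := h
  obtain ⟨j', hj', rfl⟩ := h'
  congr
  omega

lemma lastRejNull_iff (x : Fin m → Bool × ℝ) :
    lastRejNull m (R (pvals m x)) x ↔ ∃ i, pvals m x ∈ lastRejAt m R i ∧ (x i).1 = false := by
  constructor
  · rintro ⟨hR, hnull⟩
    exact ⟨_, ⟨⟨R (pvals m x) - 1, by omega⟩, by simp; omega, rfl⟩, hnull⟩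
  · rintro ⟨i, ⟨j, hj, rfl⟩, hnull⟩
    refine ⟨by omega, ?_⟩
    convert hnull using 5
    simp [hj]

lemma ite_pos_eq_sum_indicator_lastRejAt {γ : Type*} [AddCommMonoid γ] {p : Fin m → ℝ}
    (hR : R p ≤ m) (v : ℝ → γ) :
    (if 0 < R p then v (orderStat m p (R p)) else 0)
      = ∑ i, (lastRejAt m R i).indicator (fun p => v (p i)) p := by
  by_cases h0 : 0 < R p
  · set j : Fin m := ⟨R p - 1, by omega⟩
    have hmem : p ∈ lastRejAt m R (Tuple.sort p j) := ⟨j, by simp [j]; omega, rfl⟩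
    rw [if_pos h0, Finset.sum_eq_single (Tuple.sort p j)
      (fun i _ hi => Set.indicator_of_notMem (fun h => hi (eq_of_mem_lastRejAt h hmem)) _)
      (by simp), Set.indicator_of_mem hmem, orderStat, dif_pos ⟨h0, hR⟩]
  · rw [if_neg h0]
    refine (Finset.sum_eq_zero fun i _ => Set.indicator_of_notMem ?_ _).symm
    rintro ⟨j, hj, -⟩
    omega

lemma measurable_ite_pos_orderStat (hR : Measurable R) (hRle : ∀ p, R p ≤ m) {v : ℝ → ℝ}
    (hv : Measurable v) :
    Measurable fun p => if 0 < R p then v (orderStat m p (R p)) else 0 := by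
  simp_rw [ite_pos_eq_sum_indicator_lastRejAt (hRle _)]
  exact Finset.measurable_sum _ fun i _ =>
    (hv.comp (measurable_pi_apply i)).indicator (measurableSet_lastRejAt hR i)

end LastRejection

lemma measurable_pvals (m : ℕ) : Measurable (pvals m) :=
  measurable_pi_lambda _ fun i => (measurable_pi_apply i).snd

instance : IsProbabilityMeasure uniform01 :=
  ⟨by simp [uniform01, Real.volume_Icc]⟩

instance (f1 : ℝ → ℝ) : SigmaFinite (altMeasure f1) :=
  SigmaFinite.withDensity_ofReal f1

instance (π0 : ℝ) (f1 : ℝ → ℝ) : SigmaFinite (pairMeasure π0 f1) := by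
  rw [pairMeasure, ENNReal.ofReal, ENNReal.ofReal, Measure.coe_nnreal_smul,
    Measure.coe_nnreal_smul]
  infer_instance

section TwoGroups

variable {π0 : ℝ} {f1 : ℝ → ℝ}

lemma mixDensity_nonneg (hπ0 : 0 ≤ π0) (hπ1 : π0 ≤ 1) (hf1nn : ∀ t, 0 ≤ f1 t) (t : ℝ) :
    0 ≤ mixDensity π0 f1 t :=
  add_nonneg hπ0 (mul_nonneg (sub_nonneg.2 hπ1) (hf1nn t))

/-- Where `mixDensity` vanishes, `lfdr` is the junk value `π0 / 0 = 0`, but there `π0 = 0`. -/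
lemma mixDensity_mul_lfdr (hπ0 : 0 ≤ π0) (hπ1 : π0 ≤ 1) (hf1nn : ∀ t, 0 ≤ f1 t) (t : ℝ) :
    mixDensity π0 f1 t * lfdr π0 f1 t = π0 := by
  rcases eq_or_ne (mixDensity π0 f1 t) 0 with h | h
  · have : π0 = 0 := by
      have := mul_nonneg (sub_nonneg.2 hπ1) (hf1nn t)
      unfold mixDensity at h
      linarith
    simp [lfdr, this]
  · exact mul_div_cancel₀ π0 h

lemma lfdr_nonneg (hπ0 : 0 ≤ π0) (hπ1 : π0 ≤ 1) (hf1nn : ∀ t, 0 ≤ f1 t) (t : ℝ) :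
    0 ≤ lfdr π0 f1 t :=
  div_nonneg hπ0 (mixDensity_nonneg hπ0 hπ1 hf1nn t)

lemma measurable_lfdr (hf1m : Measurable f1) : Measurable (lfdr π0 f1) :=
  measurable_const.div (measurable_const.add (measurable_const.mul hf1m))

lemma lintegral_pairMeasure (hf1m : Measurable f1) {F : Bool × ℝ → ℝ≥0∞} (hF : Measurable F) :
    ∫⁻ y, F y ∂pairMeasure π0 f1
      = ENNReal.ofReal π0 * ∫⁻ t, F (false, t) ∂uniform01
        + ENNReal.ofReal (1 - π0) * ∫⁻ t, ENNReal.ofReal (f1 t) * F (true, t) ∂uniform01 := by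
  rw [pairMeasure, lintegral_add_measure, lintegral_smul_measure, lintegral_smul_measure,
    Measure.dirac_prod, Measure.dirac_prod, lintegral_map hF measurable_prodMk_left,
    lintegral_map hF measurable_prodMk_left, altMeasure,
    lintegral_withDensity_eq_lintegral_mul (g := fun t => F (true, t)) _ hf1m.ennreal_ofReal
      (hF.comp measurable_prodMk_left)]
  rfl

lemma lintegral_null_mul_pairMeasure (hf1m : Measurable f1) {g : ℝ → ℝ≥0∞} (hg : Measurable g) :
    ∫⁻ y, {y : Bool × ℝ | y.1 = false}.indicator 1 y * g y.2 ∂pairMeasure π0 f1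
      = ENNReal.ofReal π0 * ∫⁻ t, g t ∂uniform01 := by
  rw [lintegral_pairMeasure hf1m (by fun_prop (disch := measurability))]
  simp

lemma lintegral_lfdr_mul_pairMeasure (hπ0 : 0 ≤ π0) (hπ1 : π0 ≤ 1) (hf1m : Measurable f1)
    (hf1nn : ∀ t, 0 ≤ f1 t) {g : ℝ → ℝ≥0∞} (hg : Measurable g) :
    ∫⁻ y, ENNReal.ofReal (lfdr π0 f1 y.2) * g y.2 ∂pairMeasure π0 f1
      = ENNReal.ofReal π0 * ∫⁻ t, g t ∂uniform01 := by
  have hlg : Measurable fun t => ENNReal.ofReal (lfdr π0 f1 t) * g t :=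
    (measurable_lfdr hf1m).ennreal_ofReal.mul hg
  rw [lintegral_pairMeasure hf1m (F := fun y => _ * g y.2) (hlg.comp measurable_snd)]
  dsimp only
  rw [← lintegral_const_mul _ hlg, ← lintegral_const_mul _
    (f := fun t => ENNReal.ofReal (f1 t) * (ENNReal.ofReal (lfdr π0 f1 t) * g t))
    (hf1m.ennreal_ofReal.mul hlg), ← lintegral_add_left
    (f := fun t => ENNReal.ofReal π0 * (ENNReal.ofReal (lfdr π0 f1 t) * g t))
    (measurable_const.mul hlg), ← lintegral_const_mul _ hg]
  refine lintegral_congr fun t => ?_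
  have hmix : ENNReal.ofReal π0 + ENNReal.ofReal (1 - π0) * ENNReal.ofReal (f1 t)
      = ENNReal.ofReal (mixDensity π0 f1 t) := by
    rw [← ENNReal.ofReal_mul (sub_nonneg.2 hπ1),
      ← ENNReal.ofReal_add hπ0 (mul_nonneg (sub_nonneg.2 hπ1) (hf1nn t))]
    rfl
  calc ENNReal.ofReal π0 * (ENNReal.ofReal (lfdr π0 f1 t) * g t)
        + ENNReal.ofReal (1 - π0) * (ENNReal.ofReal (f1 t) * (ENNReal.ofReal (lfdr π0 f1 t) * g t))
      = ENNReal.ofReal (mixDensity π0 f1 t) * ENNReal.ofReal (lfdr π0 f1 t) * g t := by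
        rw [← hmix]; ring
    _ = ENNReal.ofReal π0 * g t := by
        rw [← ENNReal.ofReal_mul (mixDensity_nonneg hπ0 hπ1 hf1nn t),
          mixDensity_mul_lfdr hπ0 hπ1 hf1nn]

lemma jointMeasure_preimage_inter_null (hπ0 : 0 ≤ π0) (hπ1 : π0 ≤ 1)
    (hf1m : Measurable f1) (hf1nn : ∀ t, 0 ≤ f1 t) {m : ℕ} {B : Set (Fin m → ℝ)}
    (hB : MeasurableSet B) (i : Fin m) :
    jointMeasure m π0 f1 (pvals m ⁻¹' B ∩ {x | (x i).1 = false})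
      = ∫⁻ x, B.indicator (fun p => ENNReal.ofReal (lfdr π0 f1 (p i))) (pvals m x)
          ∂jointMeasure m π0 f1 := by
  have hnull : MeasurableSet {y : Bool × ℝ | y.1 = false} :=
    measurable_fst (measurableSet_singleton false)
  have key := lintegral_pi_mul_comp_eq (fun _ => pairMeasure π0 f1) measurable_snd
    (measurable_one.indicator hnull) ((measurable_lfdr hf1m).ennreal_ofReal.comp measurable_snd) i
    (fun g hg => (lintegral_null_mul_pairMeasure hf1m hg).trans
      (lintegral_lfdr_mul_pairMeasure hπ0 hπ1 hf1m hf1nn hg).symm)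
    (measurable_one.indicator hB)
  have hpvals : ∀ x, pvals m x = Prod.snd ∘ x := fun _ => rfl
  calc jointMeasure m π0 f1 (pvals m ⁻¹' B ∩ {x | (x i).1 = false})
      = ∫⁻ x, {y : Bool × ℝ | y.1 = false}.indicator 1 (x i) * B.indicator 1 (Prod.snd ∘ x)
          ∂jointMeasure m π0 f1 := by
        rw [← lintegral_indicator_one (s := pvals m ⁻¹' B ∩ {x | (x i).1 = false})
          ((measurable_pvals m hB).inter ((measurable_pi_apply i).fst
            (measurableSet_singleton false)))]
        refine lintegral_congr fun x => ?_
        by_cases hx : (x i).1 = false <;> by_cases hp : Prod.snd ∘ x ∈ B <;>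
          simp [Set.indicator, hpvals, hx, hp]
    _ = ∫⁻ x, ENNReal.ofReal (lfdr π0 f1 (x i).2) * B.indicator 1 (Prod.snd ∘ x)
          ∂jointMeasure m π0 f1 := key
    _ = _ := lintegral_congr fun x => by
        by_cases hp : Prod.snd ∘ x ∈ B <;> simp [Set.indicator, hpvals, hp]

lemma jointMeasure_lastRejNull (hπ0 : 0 ≤ π0) (hπ1 : π0 ≤ 1)
    (hf1m : Measurable f1) (hf1nn : ∀ t, 0 ≤ f1 t) {m : ℕ} {R : (Fin m → ℝ) → ℕ}
    (hRmeas : Measurable R) (hRle : ∀ p, R p ≤ m) :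
    jointMeasure m π0 f1 {x | lastRejNull m (R (pvals m x)) x}
      = ∫⁻ x, ENNReal.ofReal (if 0 < R (pvals m x)
            then lfdr π0 f1 (orderStat m (pvals m x) (R (pvals m x))) else 0)
          ∂jointMeasure m π0 f1 := by
  have hunion : {x | lastRejNull m (R (pvals m x)) x}
      = ⋃ i, pvals m ⁻¹' lastRejAt m R i ∩ {x | (x i).1 = false} := by
    ext x; simp [lastRejNull_iff]
  have hdisj : Pairwise (Function.onFun Disjoint
      fun i => pvals m ⁻¹' lastRejAt m R i ∩ {x | (x i).1 = false}) :=
    fun i i' hne => Set.disjoint_left.2 fun x hx hx' => hne (eq_of_mem_lastRejAt hx.1 hx'.1)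
  have hmeas : ∀ i, MeasurableSet (pvals m ⁻¹' lastRejAt m R i ∩ {x | (x i).1 = false}) :=
    fun i => (measurable_pvals m (measurableSet_lastRejAt hRmeas i)).inter
      ((measurable_pi_apply i).fst (measurableSet_singleton false))
  calc jointMeasure m π0 f1 {x | lastRejNull m (R (pvals m x)) x}
      = ∑ i, ∫⁻ x, (lastRejAt m R i).indicator (fun p => ENNReal.ofReal (lfdr π0 f1 (p i)))
          (pvals m x) ∂jointMeasure m π0 f1 := by
        rw [hunion, measure_iUnion hdisj hmeas, tsum_fintype]
        exact Finset.sum_congr rfl fun i _ => jointMeasure_preimage_inter_null hπ0 hπ1 hf1m hf1nn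
          (measurableSet_lastRejAt hRmeas i) i
    _ = _ := by
        rw [← lintegral_finsetSum]
        · refine lintegral_congr fun x => ?_
          rw [apply_ite ENNReal.ofReal, ENNReal.ofReal_zero]
          exact (ite_pos_eq_sum_indicator_lastRejAt (hRle _)
            fun t => ENNReal.ofReal (lfdr π0 f1 t)).symm
        · exact fun i _ => ((measurable_lfdr hf1m).ennreal_ofReal.comp
            (measurable_pi_apply i)).indicator (measurableSet_lastRejAt hRmeas i) |>.comp
              (measurable_pvals m)

end TwoGroups

theorem stmt6_general (m : ℕ) (π0 : ℝ) (hπ0 : 0 ≤ π0) (hπ1 : π0 ≤ 1)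
    (f1 : ℝ → ℝ) (hf1m : Measurable f1) (hf1nn : ∀ t, 0 ≤ f1 t)
    (R : (Fin m → ℝ) → ℕ) (hRmeas : Measurable R) (hRle : ∀ p, R p ≤ m) :
    (jointMeasure m π0 f1 {x | lastRejNull m (R (pvals m x)) x}).toReal
      = ∫ x, (if 0 < R (pvals m x)
            then lfdr π0 f1 (orderStat m (pvals m x) (R (pvals m x))) else 0)
          ∂ jointMeasure m π0 f1 := by
  have hnonneg : ∀ x, 0 ≤ if 0 < R (pvals m x)
      then lfdr π0 f1 (orderStat m (pvals m x) (R (pvals m x))) else 0 := fun x => by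
    split_ifs
    exacts [lfdr_nonneg hπ0 hπ1 hf1nn _, le_rfl]
  have hmeas := (measurable_ite_pos_orderStat hRmeas hRle (measurable_lfdr (π0 := π0) hf1m)).comp
    (measurable_pvals m)
  rw [integral_eq_lintegral_of_nonneg_ae (.of_forall hnonneg) hmeas.aestronglyMeasurable,
    jointMeasure_lastRejNull hπ0 hπ1 hf1m hf1nn hRmeas hRle]

/-- Under the two-groups model, let `R = R(p_1, …, p_m) ∈ {0, …, m}`
be any measurable function of the `p`-values, and reject the `R` hypotheses with the
smallest `p`-values. Then `P{H_(R) = 0 and R > 0} = E[lfdr(p_(R)) · 1{R > 0}]`. -/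
theorem stmt6 (m : ℕ) (hm : 0 < m) (π0 : ℝ) (hπ0 : 0 ≤ π0) (hπ1 : π0 ≤ 1)
    (f1 : ℝ → ℝ) (hf1m : Measurable f1) (hf1nn : ∀ t, 0 ≤ f1 t)
    (hf1int : ∫ t in Set.Icc (0:ℝ) 1, f1 t = 1)
    (R : (Fin m → ℝ) → ℕ) (hRmeas : Measurable R) (hRle : ∀ p, R p ≤ m) :
    (jointMeasure m π0 f1 {x | lastRejNull m (R (pvals m x)) x}).toReal
      = ∫ x, (if 0 < R (pvals m x)
            then lfdr π0 f1 (orderStat m (pvals m x) (R (pvals m x))) else 0)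
          ∂ jointMeasure m π0 f1 :=
  stmt6_general m π0 hπ0 hπ1 f1 hf1m hf1nn R hRmeas hRle
end
end

section
/- Under the two-groups model with f1 non-increasing on [0,1], suppose τ* ∈ (0,1) satisfies lfdr(τ*) = α, and let the oracle procedure be 𝓡* = {i : p_i ≤ τ*}. Then for every fixed t ∈ [0,1], the fixed-threshold procedure 𝓡_t = {i : p_i ≤ t} has regret ρ(t) := E[L_λ(H, 𝓡_t) − L_λ(H, 𝓡*)] = F(τ*) − F(t) − (π0/α)(τ* − t), and ρ(t) ≥ 0 for all t ∈ [0,1]. -/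
/-!
By linearity of expectation over the `m` i.i.d. pairs, the expected loss of the threshold `t` is
`(1 + λ) P(H = 0, p ≤ t) - P(p ≤ t) = (π0 / α) t - F(t)`, which gives the regret formula.
Since `lfdr(τ*) = α` means `π0 / α = f(τ*)`, the regret is `∫_t^τ* (f(u) - f(τ*)) du`, and this is
nonnegative on either side of `τ*` because `f = π0 + (1 - π0) f1` is non-increasing.
-/

open MeasureTheory ProbabilityTheory Filter

noncomputable section

/-- The cdf `F(t) = ∫_0^t f(u) du` of the mixture density `f = π0 + (1-π0) f1`. -/
def mixCdf (π0 : ℝ) (f1 : ℝ → ℝ) (t : ℝ) : ℝ :=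
  ∫ u in (0:ℝ)..t, mixDensity π0 f1 u

/-- The weighted classification loss `L_λ(H, 𝓡_t) = ((1+λ)V - R)/m` of the
fixed-threshold procedure `𝓡_t = {i : p_i ≤ t}`. -/
def thrLoss (m : ℕ) (lam t : ℝ) (x : Fin m → Bool × ℝ) : ℝ :=
  ((1 + lam) * ((Finset.univ.filter fun i => (x i).2 ≤ t ∧ (x i).1 = false).card : ℝ)
      - ((Finset.univ.filter fun i => (x i).2 ≤ t).card : ℝ)) / m

open Finset in
lemma natCast_card_filter_mem_eq_sum_indicator {ι β : Type*} [Fintype ι] (S : Set β)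
    [DecidablePred (· ∈ S)] (x : ι → β) :
    (#{i | x i ∈ S} : ℝ) = ∑ i, S.indicator 1 (x i) := by
  simp [Set.indicator_apply]

section IidCounts

variable {ι β : Type*} [Fintype ι] [MeasurableSpace β] (μ : Measure β) [IsProbabilityMeasure μ]
  {S : Set β} [DecidablePred (· ∈ S)]

open Finset

lemma integrable_natCast_card_filter_mem (hS : MeasurableSet S) :
    Integrable (fun x : ι → β => (#{i | x i ∈ S} : ℝ)) (Measure.pi fun _ => μ) := by
  simp_rw [natCast_card_filter_mem_eq_sum_indicator]
  exact integrable_finsetSum _ fun i _ =>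
    ((integrable_const 1).indicator hS).comp_measurable (measurable_pi_apply i)

lemma integral_natCast_card_filter_mem (hS : MeasurableSet S) :
    ∫ x : ι → β, (#{i | x i ∈ S} : ℝ) ∂(Measure.pi fun _ => μ)
      = Fintype.card ι * μ.real S := by
  simp_rw [natCast_card_filter_mem_eq_sum_indicator]
  rw [integral_finsetSum _ fun i _ =>
    ((integrable_const 1).indicator hS).comp_measurable (measurable_pi_apply i)]
  have hcoord (i : ι) : ∫ x : ι → β, S.indicator 1 (x i) ∂(Measure.pi fun _ => μ) = μ.real S := by
    have h := integral_map (μ := Measure.pi fun _ => μ) (measurable_pi_apply i).aemeasurable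
      (stronglyMeasurable_const.indicator hS).aestronglyMeasurable (f := S.indicator (1 : β → ℝ))
    rw [(measurePreserving_eval _ i).map_eq, integral_indicator_one hS] at h
    exact h.symm
  simp [hcoord]

end IidCounts

lemma Set.Iic_inter_Icc_of_le {α : Type*} [Preorder α] {a b c : α} (h : a ≤ c) :
    Set.Iic a ∩ Set.Icc b c = Set.Icc b a := by
  ext u
  simp only [Set.mem_inter_iff, Set.mem_Iic, Set.mem_Icc]
  exact ⟨fun ⟨hua, hbu, _⟩ => ⟨hbu, hua⟩, fun ⟨hbu, hua⟩ => ⟨hua, hbu, hua.trans h⟩⟩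

lemma MeasureTheory.IntegrableOn.of_setIntegral_eq_one {α : Type*} [MeasurableSpace α]
    {μ : Measure α} {s : Set α} {f : α → ℝ} (h : ∫ x in s, f x ∂μ = 1) : IntegrableOn f s μ :=
  Integrable.of_integral_ne_zero (by simp [h])

lemma measurableSet_snd_le {α : Type*} [MeasurableSpace α] (t : ℝ) :
    MeasurableSet {y : α × ℝ | y.2 ≤ t} :=
  measurableSet_le measurable_snd measurable_const

lemma measurableSet_snd_le_fst_eq_false (t : ℝ) :
    MeasurableSet {y : Bool × ℝ | y.2 ≤ t ∧ y.1 = false} :=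
  (measurableSet_snd_le t).inter (measurable_fst (measurableSet_singleton false))

lemma AntitoneOn.mul_sub_le_intervalIntegral {g : ℝ → ℝ} {a b t τ : ℝ}
    (hg : AntitoneOn g (Set.Icc a b)) (ht : t ∈ Set.Icc a b) (hτ : τ ∈ Set.Icc a b) :
    g τ * (τ - t) ≤ ∫ u in t..τ, g u := by
  have hint (x y : ℝ) (hx : x ∈ Set.Icc a b) (hy : y ∈ Set.Icc a b) :
      IntervalIntegrable g volume x y :=
    (hg.mono (Set.uIcc_subset_Icc hx hy)).intervalIntegrable
  rcases le_total t τ with htτ | hτt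
  · calc g τ * (τ - t) = ∫ _ in t..τ, g τ := by simp [mul_comm]
      _ ≤ ∫ u in t..τ, g u :=
        intervalIntegral.integral_mono_on htτ intervalIntegrable_const (hint t τ ht hτ)
          fun u hu => hg ⟨ht.1.trans hu.1, hu.2.trans hτ.2⟩ hτ hu.2
  · have : ∫ u in τ..t, g u ≤ ∫ _ in τ..t, g τ :=
      intervalIntegral.integral_mono_on hτt (hint τ t hτ ht) intervalIntegrable_const
        fun u hu => hg hτ ⟨hτ.1.trans hu.1, hu.2.trans ht.2⟩ hu.1
    rw [intervalIntegral.integral_symm τ t]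
    simp only [intervalIntegral.integral_const, smul_eq_mul] at this
    linarith

instance inst_s9 : IsProbabilityMeasure uniform01 := by
  constructor
  simp [uniform01, Real.volume_Icc]

section TwoGroups

open Set ENNReal

variable {π0 : ℝ} {f1 : ℝ → ℝ} {t : ℝ}

lemma uniform01_Iic (h1 : t ≤ 1) : uniform01 (Iic t) = ENNReal.ofReal t := by
  rw [uniform01, Measure.restrict_apply measurableSet_Iic, Iic_inter_Icc_of_le h1,
    Real.volume_Icc, sub_zero]

instance : SigmaFinite (altMeasure f1) :=
  inferInstanceAs (SigmaFinite (uniform01.withDensity _))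

lemma altMeasure_apply (hf1nn : ∀ t, 0 ≤ f1 t) (hf1i : IntegrableOn f1 (Icc 0 1)) {s : Set ℝ}
    (hs : MeasurableSet s) : altMeasure f1 s = ENNReal.ofReal (∫ u in s ∩ Icc 0 1, f1 u) := by
  rw [altMeasure, withDensity_apply _ hs, uniform01, Measure.restrict_restrict hs,
    ← ofReal_integral_eq_lintegral_ofReal (hf1i.mono_set inter_subset_right)
      (ae_of_all _ fun u => hf1nn u)]

lemma pairMeasure_apply {S : Set (Bool × ℝ)} (hS : MeasurableSet S) :
    pairMeasure π0 f1 S = ENNReal.ofReal π0 * uniform01 (Prod.mk false ⁻¹' S)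
      + ENNReal.ofReal (1 - π0) * altMeasure f1 (Prod.mk true ⁻¹' S) := by
  simp only [pairMeasure, Measure.add_apply, Measure.smul_apply, smul_eq_mul, Measure.dirac_prod,
    Measure.map_apply measurable_prodMk_left hS]

lemma isProbabilityMeasure_pairMeasure (hπ0 : 0 ≤ π0) (hπ1 : π0 ≤ 1) (hf1nn : ∀ t, 0 ≤ f1 t)
    (hf1int : ∫ t in Icc (0:ℝ) 1, f1 t = 1) : IsProbabilityMeasure (pairMeasure π0 f1) := by
  constructor
  rw [pairMeasure_apply MeasurableSet.univ, preimage_univ, preimage_univ, measure_univ,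
    altMeasure_apply hf1nn (IntegrableOn.of_setIntegral_eq_one hf1int) MeasurableSet.univ,
    univ_inter, hf1int, ofReal_one, mul_one, mul_one, ← ofReal_add hπ0 (by linarith)]
  simp

lemma mixCdf_eq (hf1i : IntegrableOn f1 (Icc 0 1)) (h0 : 0 ≤ t) (h1 : t ≤ 1) :
    mixCdf π0 f1 t = π0 * t + (1 - π0) * ∫ u in Icc 0 t, f1 u := by
  have hf1i' : IntervalIntegrable f1 volume 0 t :=
    (intervalIntegrable_iff_integrableOn_Icc_of_le h0).2 (hf1i.mono_set (Icc_subset_Icc_right h1))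
  rw [mixCdf]
  unfold mixDensity
  rw [intervalIntegral.integral_add intervalIntegrable_const
      (hf1i'.const_mul _), intervalIntegral.integral_const, intervalIntegral.integral_const_mul,
    intervalIntegral.integral_of_le h0, integral_Icc_eq_integral_Ioc, smul_eq_mul, sub_zero,
    mul_comm]

lemma pairMeasure_real_snd_le (hπ0 : 0 ≤ π0) (hπ1 : π0 ≤ 1) (hf1nn : ∀ t, 0 ≤ f1 t)
    (hf1i : IntegrableOn f1 (Icc 0 1)) (h0 : 0 ≤ t) (h1 : t ≤ 1) :
    (pairMeasure π0 f1).real {y | y.2 ≤ t} = mixCdf π0 f1 t := by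
  have hpre (b : Bool) : Prod.mk b ⁻¹' {y : Bool × ℝ | y.2 ≤ t} = Iic t := rfl
  have halt : 0 ≤ (1 - π0) * ∫ u in Icc 0 t, f1 u :=
    mul_nonneg (by linarith) (setIntegral_nonneg measurableSet_Icc fun u _ => hf1nn u)
  rw [measureReal_def, pairMeasure_apply (measurableSet_snd_le t), hpre, hpre, uniform01_Iic h1,
    altMeasure_apply hf1nn hf1i measurableSet_Iic, Iic_inter_Icc_of_le h1, ← ofReal_mul hπ0,
    ← ofReal_mul (by linarith), ← ofReal_add (mul_nonneg hπ0 h0) halt,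
    toReal_ofReal (add_nonneg (mul_nonneg hπ0 h0) halt), mixCdf_eq hf1i h0 h1]

lemma pairMeasure_real_snd_le_fst_eq_false (hπ0 : 0 ≤ π0) (h0 : 0 ≤ t) (h1 : t ≤ 1) :
    (pairMeasure π0 f1).real {y | y.2 ≤ t ∧ y.1 = false} = π0 * t := by
  have hfalse : Prod.mk false ⁻¹' {y : Bool × ℝ | y.2 ≤ t ∧ y.1 = false} = Iic t := by
    ext; simp
  have htrue : Prod.mk true ⁻¹' {y : Bool × ℝ | y.2 ≤ t ∧ y.1 = false} = ∅ := by
    ext; simp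
  rw [measureReal_def, pairMeasure_apply (measurableSet_snd_le_fst_eq_false t), hfalse, htrue,
    uniform01_Iic h1, measure_empty, mul_zero, add_zero, ← ofReal_mul hπ0,
    toReal_ofReal (mul_nonneg hπ0 h0)]

lemma integrable_thrLoss (hπ0 : 0 ≤ π0) (hπ1 : π0 ≤ 1) (hf1nn : ∀ t, 0 ≤ f1 t)
    (hf1int : ∫ t in Icc (0:ℝ) 1, f1 t = 1) (m : ℕ) (lam t : ℝ) :
    Integrable (thrLoss m lam t) (jointMeasure m π0 f1) := by
  have := isProbabilityMeasure_pairMeasure hπ0 hπ1 hf1nn hf1int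
  have hV := integrable_natCast_card_filter_mem (ι := Fin m) (pairMeasure π0 f1)
    (measurableSet_snd_le_fst_eq_false t)
  have hR := integrable_natCast_card_filter_mem (ι := Fin m) (pairMeasure π0 f1)
    (measurableSet_snd_le t)
  exact ((hV.const_mul (1 + lam)).sub hR).div_const _

lemma integral_thrLoss (hπ0 : 0 ≤ π0) (hπ1 : π0 ≤ 1) (hf1nn : ∀ t, 0 ≤ f1 t)
    (hf1int : ∫ t in Icc (0:ℝ) 1, f1 t = 1) {m : ℕ} (hm : 0 < m) (lam : ℝ) (h0 : 0 ≤ t)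
    (h1 : t ≤ 1) :
    ∫ x, thrLoss m lam t x ∂jointMeasure m π0 f1 = (1 + lam) * π0 * t - mixCdf π0 f1 t := by
  have := isProbabilityMeasure_pairMeasure hπ0 hπ1 hf1nn hf1int
  have hV := integrable_natCast_card_filter_mem (ι := Fin m) (pairMeasure π0 f1)
    (measurableSet_snd_le_fst_eq_false t)
  have hR := integrable_natCast_card_filter_mem (ι := Fin m) (pairMeasure π0 f1)
    (measurableSet_snd_le t)
  calc ∫ x, thrLoss m lam t x ∂jointMeasure m π0 f1
      = ((1 + lam) * (Fintype.card (Fin m) *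
            (pairMeasure π0 f1).real {y | y.2 ≤ t ∧ y.1 = false})
          - Fintype.card (Fin m) * (pairMeasure π0 f1).real {y | y.2 ≤ t}) / m := by
        rw [← integral_natCast_card_filter_mem _ (measurableSet_snd_le_fst_eq_false t),
          ← integral_natCast_card_filter_mem _ (measurableSet_snd_le t), ← integral_const_mul,
          ← integral_sub (hV.const_mul _) hR, ← integral_div]
        rfl
    _ = (1 + lam) * π0 * t - mixCdf π0 f1 t := by
        rw [pairMeasure_real_snd_le_fst_eq_false hπ0 h0 h1,
          pairMeasure_real_snd_le hπ0 hπ1 hf1nn (.of_setIntegral_eq_one hf1int) h0 h1,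
          Fintype.card_fin]
        field_simp

lemma antitoneOn_mixDensity (hπ1 : π0 ≤ 1) (hf1mono : AntitoneOn f1 (Icc 0 1)) :
    AntitoneOn (mixDensity π0 f1) (Icc 0 1) := fun _ ha _ hb hab =>
  add_le_add_right (mul_le_mul_of_nonneg_left (hf1mono ha hb hab) (sub_nonneg.2 hπ1)) _

lemma mixDensity_mul_sub_le_mixCdf_sub (hπ1 : π0 ≤ 1) (hf1mono : AntitoneOn f1 (Icc 0 1))
    {τ : ℝ} (ht : t ∈ Icc (0:ℝ) 1) (hτ : τ ∈ Icc (0:ℝ) 1) :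
    mixDensity π0 f1 τ * (τ - t) ≤ mixCdf π0 f1 τ - mixCdf π0 f1 t := by
  have hf := antitoneOn_mixDensity hπ1 hf1mono
  have h0 : (0:ℝ) ∈ Icc (0:ℝ) 1 := ⟨le_rfl, zero_le_one⟩
  rw [mixCdf, mixCdf, intervalIntegral.integral_interval_sub_left
    (hf.mono (uIcc_subset_Icc h0 hτ)).intervalIntegrable
    (hf.mono (uIcc_subset_Icc h0 ht)).intervalIntegrable]
  exact hf.mul_sub_le_intervalIntegral ht hτ

lemma div_eq_mixDensity_of_lfdr_eq {α τ : ℝ} (hα : 0 < α) (h : lfdr π0 f1 τ = α) :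
    π0 / α = mixDensity π0 f1 τ := by
  have hπ0 : π0 ≠ 0 := by
    rintro rfl
    rw [lfdr, zero_div] at h
    exact hα.ne h
  rw [← h, lfdr, div_div_cancel₀ hπ0]

end TwoGroups

theorem stmt9_general (m : ℕ) (hm : 0 < m) (π0 : ℝ) (hπ0 : 0 ≤ π0) (hπ1 : π0 ≤ 1)
    (f1 : ℝ → ℝ) (hf1nn : ∀ t, 0 ≤ f1 t)
    (hf1int : ∫ t in Set.Icc (0:ℝ) 1, f1 t = 1)
    (hf1mono : AntitoneOn f1 (Set.Icc 0 1))
    (lam α : ℝ) (hlam : 0 < lam) (hα : α = 1 / (1 + lam))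
    (τs : ℝ) (hτs : τs ∈ Set.Ioo (0:ℝ) 1) (hlfdr : lfdr π0 f1 τs = α) :
    ∀ t ∈ Set.Icc (0:ℝ) 1,
      (∫ x, (thrLoss m lam t x - thrLoss m lam τs x) ∂ jointMeasure m π0 f1
          = mixCdf π0 f1 τs - mixCdf π0 f1 t - (π0 / α) * (τs - t)) ∧
      0 ≤ mixCdf π0 f1 τs - mixCdf π0 f1 t - (π0 / α) * (τs - t) := by
  intro t ht
  have hτ : τs ∈ Set.Icc (0:ℝ) 1 := Set.Ioo_subset_Icc_self hτs
  have hπα : π0 / α = (1 + lam) * π0 := by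
    rw [hα, div_div_eq_mul_div, div_one, mul_comm]
  constructor
  · rw [integral_sub (integrable_thrLoss hπ0 hπ1 hf1nn hf1int m lam t)
        (integrable_thrLoss hπ0 hπ1 hf1nn hf1int m lam τs),
      integral_thrLoss hπ0 hπ1 hf1nn hf1int hm lam ht.1 ht.2,
      integral_thrLoss hπ0 hπ1 hf1nn hf1int hm lam hτ.1 hτ.2, hπα]
    ring
  · rw [div_eq_mixDensity_of_lfdr_eq (by rw [hα]; positivity) hlfdr, sub_nonneg]
    exact mixDensity_mul_sub_le_mixCdf_sub hπ1 hf1mono ht hτ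

/-- Under the two-groups model with `f1` non-increasing on `[0,1]`,
if `τ* ∈ (0,1)` satisfies `lfdr(τ*) = α`, then for every fixed `t ∈ [0,1]` the
fixed-threshold procedure `𝓡_t = {i : p_i ≤ t}` has regret
`ρ(t) := E[L_λ(H,𝓡_t) - L_λ(H,𝓡_{τ*})] = F(τ*) - F(t) - (π0/α)(τ* - t)`,
and `ρ(t) ≥ 0`. -/
theorem stmt9 (m : ℕ) (hm : 0 < m) (π0 : ℝ) (hπ0 : 0 ≤ π0) (hπ1 : π0 ≤ 1)
    (f1 : ℝ → ℝ) (hf1m : Measurable f1) (hf1nn : ∀ t, 0 ≤ f1 t)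
    (hf1int : ∫ t in Set.Icc (0:ℝ) 1, f1 t = 1)
    (hf1mono : AntitoneOn f1 (Set.Icc 0 1))
    (lam α : ℝ) (hlam : 0 < lam) (hα : α = 1 / (1 + lam))
    (τs : ℝ) (hτs : τs ∈ Set.Ioo (0:ℝ) 1) (hlfdr : lfdr π0 f1 τs = α) :
    ∀ t ∈ Set.Icc (0:ℝ) 1,
      (∫ x, (thrLoss m lam t x - thrLoss m lam τs x) ∂ jointMeasure m π0 f1
          = mixCdf π0 f1 τs - mixCdf π0 f1 t - (π0 / α) * (τs - t)) ∧
      0 ≤ mixCdf π0 f1 τs - mixCdf π0 f1 t - (π0 / α) * (τs - t) :=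
  stmt9_general m hm π0 hπ0 hπ1 f1 hf1nn hf1int hf1mono lam α hlam hα τs hτs hlfdr
end
end

section
/- Let f be a continuous, non-increasing probability density on [0,1] with cdf F, let q > 0, and suppose t_q ∈ (0,1) satisfies f(t_q) = 1/q and F(t_q) > t_q·f(t_q). Set q′ = t_q / F(t_q). Then t_q = max{t ∈ [0,1] : F(t) ≥ t/q′}; that is, the population Benjamini–Hochberg threshold at level q′ coincides with the population SL threshold t_q. -/
open MeasureTheory Set

/-!
Since `f` is non-increasing, for `t ≥ t_q` the cdf satisfies
`F t ≤ F t_q + (t - t_q) f t_q`. The ray `t ↦ t F(t_q) / t_q` passes through `(t_q, F t_q)`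
with slope `F(t_q) / t_q > f(t_q)`, so beyond `t_q` it lies strictly above `F`.
-/

theorem intervalIntegral_le_sub_mul_of_antitoneOn {f : ℝ → ℝ} {a b : ℝ}
    (hf : AntitoneOn f (Icc a b)) (hab : a ≤ b) :
    ∫ u in a..b, f u ≤ (b - a) * f a := by
  have hint : IntervalIntegrable f volume a b := (uIcc_of_le hab ▸ hf).intervalIntegrable
  calc ∫ u in a..b, f u ≤ ∫ _ in a..b, f a :=
        intervalIntegral.integral_mono_on hab hint intervalIntegrable_const
          fun u hu => hf (left_mem_Icc.2 hab) hu hu.1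
    _ = (b - a) * f a := by simp

theorem intervalIntegral_le_add_sub_mul_of_antitoneOn {f : ℝ → ℝ} {c a b : ℝ}
    (hf : AntitoneOn f (Icc c b)) (hca : c ≤ a) (hab : a ≤ b) :
    ∫ u in c..b, f u ≤ (∫ u in c..a, f u) + (b - a) * f a := by
  have hca' : IntervalIntegrable f volume c a :=
    (uIcc_of_le hca ▸ hf.mono (Icc_subset_Icc_right hab)).intervalIntegrable
  have hab' : IntervalIntegrable f volume a b :=
    (uIcc_of_le hab ▸ hf.mono (Icc_subset_Icc_left hca)).intervalIntegrable
  rw [← intervalIntegral.integral_add_adjacent_intervals hca' hab']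
  gcongr
  exact intervalIntegral_le_sub_mul_of_antitoneOn (hf.mono (Icc_subset_Icc_left hca)) hab

theorem lt_div_div_of_le_add_sub_mul {s t m Fs Ft : ℝ} (hs : 0 < s) (hst : s < t)
    (hslope : s * m < Fs) (hFt : Ft ≤ Fs + (t - s) * m) :
    Ft < t / (s / Fs) := by
  rw [div_div_eq_mul_div, lt_div_iff₀ hs]
  nlinarith [mul_lt_mul_of_pos_left hslope (sub_pos.2 hst), mul_le_mul_of_nonneg_left hFt hs.le]

theorem stmt11_general (f : ℝ → ℝ)
    (hmono : AntitoneOn f (Set.Icc 0 1))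
    (F : ℝ → ℝ) (hF : ∀ t, F t = ∫ u in (0:ℝ)..t, f u)
    (tq : ℝ) (htq : tq ∈ Set.Ioo (0:ℝ) 1)
    (hgt : tq * f tq < F tq) :
    IsGreatest {t ∈ Set.Icc (0:ℝ) 1 | t / (tq / F tq) ≤ F t} tq := by
  obtain ⟨htq0, htq1⟩ := htq
  refine ⟨⟨⟨htq0.le, htq1.le⟩, (div_div_cancel₀ htq0.ne').le⟩, ?_⟩
  rintro t ⟨⟨-, ht1⟩, hle⟩
  by_contra! htqt
  have hcdf : F t ≤ F tq + (t - tq) * f tq := by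
    rw [hF, hF]
    exact intervalIntegral_le_add_sub_mul_of_antitoneOn
      (hmono.mono (Icc_subset_Icc_right ht1)) htq0.le htqt.le
  exact (lt_div_div_of_le_add_sub_mul htq0 htqt hgt hcdf).not_ge hle

/-- Let `f` be a continuous, non-increasing probability density on
`[0,1]` with cdf `F`, let `q > 0`, and suppose `t_q ∈ (0,1)` satisfies `f(t_q) = 1/q`
and `F(t_q) > t_q f(t_q)`. Setting `q' = t_q / F(t_q)`, the population BH threshold at
level `q'` coincides with the population SL threshold:
`t_q = max{t ∈ [0,1] : F(t) ≥ t/q'}`. -/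
theorem stmt11 (f : ℝ → ℝ) (hcont : ContinuousOn f (Set.Icc 0 1))
    (hmono : AntitoneOn f (Set.Icc 0 1)) (hnn : ∀ u, 0 ≤ f u)
    (hint : ∫ u in Set.Icc (0:ℝ) 1, f u = 1)
    (F : ℝ → ℝ) (hF : ∀ t, F t = ∫ u in (0:ℝ)..t, f u)
    (q : ℝ) (hq : 0 < q) (tq : ℝ) (htq : tq ∈ Set.Ioo (0:ℝ) 1)
    (hftq : f tq = 1 / q) (hgt : tq * f tq < F tq) :
    IsGreatest {t ∈ Set.Icc (0:ℝ) 1 | t / (tq / F tq) ≤ F t} tq :=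
  stmt11_general f hmono F hF tq htq hgt
end

section
/- For every q ∈ [0,1), the series Σ_{k=1}^∞ P{U_k ≤ q} converges, where U_k ~ Gamma(shape k, rate k). -/
open MeasureTheory ProbabilityTheory Real Set

lemma aux_mono {x q : ℝ} (hx : 0 ≤ x) (hxq : x ≤ q) (hq1 : q ≤ 1) :
    x * Real.exp (-x) ≤ q * Real.exp (-q) := by
  have h1 : 1 + (x - q) ≤ Real.exp (x - q) := by
    have := Real.add_one_le_exp (x - q); linarith
  have h2 : x ≤ q * Real.exp (x - q) := by
    nlinarith [Real.exp_pos (x - q), mul_nonneg hx (le_trans hx hxq)]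
  calc x * Real.exp (-x) ≤ (q * Real.exp (x - q)) * Real.exp (-x) :=
        mul_le_mul_of_nonneg_right h2 (Real.exp_pos _).le
    _ = q * Real.exp (-q) := by rw [mul_assoc, ← Real.exp_add]; ring_nf

lemma aux_qe {q : ℝ} (hq0 : 0 ≤ q) (hq1 : q < 1) : q * Real.exp (1 - q) < 1 := by
  have h : q < Real.exp (q - 1) := by
    have := Real.add_one_lt_exp (x := q - 1) (by intro h; apply absurd h; intro h'; linarith [sub_eq_zero.mp h'])
    linarith
  calc q * Real.exp (1 - q) < Real.exp (q - 1) * Real.exp (1 - q) :=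
        mul_lt_mul_of_pos_right h (Real.exp_pos _)
    _ = 1 := by rw [← Real.exp_add]; ring_nf; exact Real.exp_zero

lemma aux_pt (k : ℕ) {q x : ℝ} (hq0 : 0 ≤ q) (hq1 : q ≤ 1) (hx0 : 0 ≤ x) (hxq : x ≤ q) :
    ((k:ℝ)+1) ^ ((k:ℝ)+1) / Real.Gamma ((k:ℝ)+1) * x ^ ((k:ℝ)+1-1)
      * Real.exp (-(((k:ℝ)+1) * x))
      ≤ ((k:ℝ)+1) ^ (k+1) / (Nat.factorial k) * (q * Real.exp (-q)) ^ k := by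
  have hG : Real.Gamma ((k:ℝ)+1) = Nat.factorial k := by
    exact_mod_cast Real.Gamma_nat_eq_factorial k
  have haa : ((k:ℝ)+1) ^ ((k:ℝ)+1) = ((k:ℝ)+1) ^ (k+1) := by
    rw [show ((k:ℝ) + 1) = ((k+1 : ℕ) : ℝ) by push_cast; ring, Real.rpow_natCast]
  have hx1 : x ^ ((k:ℝ)+1-1) = x ^ k := by
    rw [add_sub_cancel_right, Real.rpow_natCast]
  have hexp : Real.exp (-(((k:ℝ)+1) * x)) = Real.exp (-x) ^ k * Real.exp (-x) := by
    rw [← Real.exp_nat_mul, ← Real.exp_add]; ring_nf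
  rw [hG, haa, hx1, hexp]
  have hC : (0:ℝ) ≤ ((k:ℝ)+1) ^ (k+1) / (Nat.factorial k) := by positivity
  have key : x ^ k * (Real.exp (-x) ^ k * Real.exp (-x)) ≤ (q * Real.exp (-q)) ^ k := by
    calc x ^ k * (Real.exp (-x) ^ k * Real.exp (-x))
        = (x * Real.exp (-x)) ^ k * Real.exp (-x) := by rw [mul_pow]; ring
      _ ≤ (q * Real.exp (-q)) ^ k * 1 := by
          apply mul_le_mul (pow_le_pow_left₀ (by positivity)
            (aux_mono hx0 hxq hq1) k) (Real.exp_le_one_iff.mpr (by linarith))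
            (Real.exp_pos _).le (by positivity)
      _ = (q * Real.exp (-q)) ^ k := mul_one _
  calc ((k:ℝ)+1) ^ (k+1) / (Nat.factorial k) * x ^ k * (Real.exp (-x) ^ k * Real.exp (-x))
      = ((k:ℝ)+1) ^ (k+1) / (Nat.factorial k) * (x ^ k * (Real.exp (-x) ^ k * Real.exp (-x))) := by
        ring
    _ ≤ _ := mul_le_mul_of_nonneg_left key hC

/-- For every `q ∈ [0,1)`, the series `Σ_{k=1}^∞ P{U_k ≤ q}`
converges, where `U_k ~ Gamma(shape k, rate k)`. -/
theorem stmt14 (q : ℝ) (hq : q ∈ Set.Ico (0:ℝ) 1) :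
    Summable (fun k : ℕ =>
      (gammaMeasure ((k : ℝ) + 1) ((k : ℝ) + 1) (Set.Iic q)).toReal) := by
  obtain ⟨hq0, hq1⟩ := hq
  set c : ℝ := q * Real.exp (1 - q) with hc
  have hc0 : 0 ≤ c := by positivity
  have hc1 : c < 1 := aux_qe hq0 hq1
  have hsum : Summable (fun k : ℕ => Real.exp 1 * (((k : ℝ) + 1) * c ^ k)) := by
    have h1 : Summable (fun k : ℕ => ((k : ℝ)) ^ 1 * c ^ k) :=
      summable_pow_mul_geometric_of_norm_lt_one 1
        (by rwa [Real.norm_eq_abs, abs_of_nonneg hc0])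
    have h2 : Summable (fun k : ℕ => c ^ k) := summable_geometric_of_lt_one hc0 hc1
    refine ((h1.add h2).mul_left (Real.exp 1)).congr fun k => ?_
    simp; ring
  refine Summable.of_nonneg_of_le (fun k => ENNReal.toReal_nonneg) (fun k => ?_) hsum
  set B : ℝ := ((k : ℝ) + 1) ^ (k + 1) / (Nat.factorial k) * (q * Real.exp (-q)) ^ k with hB
  have hB0 : 0 ≤ B := by positivity
  have hmeas : gammaMeasure ((k:ℝ)+1) ((k:ℝ)+1) (Set.Iic q) ≤ ENNReal.ofReal B := by
    rw [gammaMeasure, withDensity_apply _ measurableSet_Iic,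
      lintegral_Iic_eq_lintegral_Iio_add_Icc _ hq0, lintegral_gammaPDF_of_nonpos le_rfl,
      zero_add]
    calc ∫⁻ x in Set.Icc 0 q, gammaPDF ((k:ℝ)+1) ((k:ℝ)+1) x
        ≤ ∫⁻ _ in Set.Icc 0 q, ENNReal.ofReal B := by
          refine setLIntegral_mono measurable_const fun x hx => ?_
          obtain ⟨hx0, hxq⟩ := hx
          rw [gammaPDF_of_nonneg hx0]
          exact ENNReal.ofReal_le_ofReal (aux_pt k hq0 hq1.le hx0 hxq)
      _ = ENNReal.ofReal B * volume (Set.Icc 0 q) := setLIntegral_const _ _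
      _ ≤ ENNReal.ofReal B * 1 := by
          apply mul_le_mul_right ?_ _
          rw [Real.volume_Icc]
          exact ENNReal.ofReal_le_one.mpr (by linarith)
      _ = ENNReal.ofReal B := mul_one _
  have hterm : (gammaMeasure ((k:ℝ)+1) ((k:ℝ)+1) (Set.Iic q)).toReal ≤ B :=
    ENNReal.toReal_le_of_le_ofReal hB0 hmeas
  refine hterm.trans ?_
  have hfac : ((k:ℝ)+1) ^ k / (Nat.factorial k) ≤ Real.exp ((k:ℝ)+1) :=
    Real.pow_div_factorial_le_exp ((k:ℝ)+1) (by positivity) k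
  have hck : c ^ k = Real.exp 1 ^ k * (q * Real.exp (-q)) ^ k := by
    rw [hc, ← mul_pow]
    congr 1
    rw [show Real.exp (1 - q) = Real.exp 1 * Real.exp (-q) by rw [← Real.exp_add]; ring_nf]
    ring
  rw [hck]
  have hexpk : Real.exp ((k:ℝ)+1) = Real.exp 1 * Real.exp 1 ^ k := by
    rw [← Real.exp_nat_mul, ← Real.exp_add]; ring_nf
  have hqe : (0:ℝ) ≤ (q * Real.exp (-q)) ^ k := by positivity
  calc B = ((k:ℝ)+1) * (((k:ℝ)+1) ^ k / (Nat.factorial k)) * (q * Real.exp (-q)) ^ k := by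
        rw [hB, pow_succ]; ring
    _ ≤ ((k:ℝ)+1) * Real.exp ((k:ℝ)+1) * (q * Real.exp (-q)) ^ k := by
        apply mul_le_mul_of_nonneg_right (mul_le_mul_of_nonneg_left hfac (by positivity)) hqe
    _ = Real.exp 1 * (((k:ℝ)+1) * (Real.exp 1 ^ k * (q * Real.exp (-q)) ^ k)) := by
        rw [hexpk]; ring
end

section
/- For any p_1,…,p_m ∈ [0,1] and any q > 0, the SL threshold τ_q = p_(R_q) maximizes the function t ↦ q·F_m(t) − t over t ∈ [0,1], where F_m is the empirical cdf of p_1,…,p_m; equivalently, for π0 ∈ (0,1], λ > 0, α = 1/(1+λ), and q = α/π0, τ_q minimizes the estimated weighted classification loss L̂_λ(t; π0) = (1+λ)·(π0·t − α·F_m(t)) over t ∈ [0,1]. -/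
open MeasureTheory ProbabilityTheory Filter

noncomputable section

lemma card_filter_symm_lt {m : ℕ} (σ : Equiv.Perm (Fin m)) (c : ℕ) (hc : c ≤ m) :
    (Finset.univ.filter fun i : Fin m => ((σ.symm i : Fin m) : ℕ) < c).card = c := by
  have h1 : (Finset.univ.filter fun i : Fin m => ((σ.symm i : Fin m) : ℕ) < c)
      = ((Finset.range c).attachFin (fun n hn =>
          lt_of_lt_of_le (Finset.mem_range.mp hn) hc)).map ⟨σ, σ.injective⟩ := by
    ext i
    simp only [Finset.mem_filter, Finset.mem_univ, true_and, Finset.mem_map,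
      Finset.mem_attachFin, Finset.mem_range, Function.Embedding.coeFn_mk]
    constructor
    · intro h; exact ⟨σ.symm i, h, by simp⟩
    · rintro ⟨a, ha, rfl⟩; simpa using ha
  rw [h1, Finset.card_map, Finset.card_attachFin, Finset.card_range]

/-- Lemma A: at least `k` of the `p_i` are `≤ p_(k)`. -/
lemma count_orderStat_ge {m : ℕ} (p : Fin m → ℝ) (k : ℕ) (hk : k ≤ m) :
    k ≤ (Finset.univ.filter fun i => p i ≤ orderStat m p k).card := by
  rcases Nat.eq_zero_or_pos k with rfl | hk1
  · simp
  · set σ := Tuple.sort p with hσ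
    have hks : orderStat m p k = p (σ ⟨k - 1, by omega⟩) := by
      rw [orderStat, dif_pos ⟨hk1, hk⟩]
    have hsub : (Finset.univ.filter fun i : Fin m => ((σ.symm i : Fin m) : ℕ) < k) ⊆
        Finset.univ.filter fun i => p i ≤ orderStat m p k := by
      intro i hi
      simp only [Finset.mem_filter, Finset.mem_univ, true_and] at hi ⊢
      rw [hks]
      have hle : σ.symm i ≤ (⟨k - 1, by omega⟩ : Fin m) := by
        rw [Fin.le_def]; simpa using Nat.le_sub_one_of_lt hi
      have := Tuple.monotone_sort p hle
      simpa [hσ, Function.comp] using this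
    calc k = _ := (card_filter_symm_lt σ k hk).symm
      _ ≤ _ := Finset.card_le_card hsub

/-- Lemma B: `p_(k) ≤ t` where `k = #{i : p_i ≤ t}`, for `t ≥ 0`. -/
lemma orderStat_count_le {m : ℕ} (p : Fin m → ℝ) (t : ℝ) (ht : 0 ≤ t) :
    orderStat m p (Finset.univ.filter fun i => p i ≤ t).card ≤ t := by
  set k := (Finset.univ.filter fun i => p i ≤ t).card with hkdef
  have hk : k ≤ m := by
    simpa using (Finset.card_filter_le Finset.univ fun i => p i ≤ t)
  rcases Nat.eq_zero_or_pos k with hk0 | hk1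
  · rw [hk0]; simpa [orderStat] using ht
  · set σ := Tuple.sort p with hσ
    have hks : orderStat m p k = p (σ ⟨k - 1, by omega⟩) := by
      rw [orderStat, dif_pos ⟨hk1, hk⟩]
    by_contra hcon
    push_neg at hcon
    have hsub : (Finset.univ.filter fun i => p i ≤ t) ⊆
        Finset.univ.filter fun i : Fin m => ((σ.symm i : Fin m) : ℕ) < k - 1 := by
      intro i hi
      simp only [Finset.mem_filter, Finset.mem_univ, true_and] at hi ⊢
      by_contra hge
      push_neg at hge
      have hle : (⟨k - 1, by omega⟩ : Fin m) ≤ σ.symm i := by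
        rw [Fin.le_def]; simpa using hge
      have hmono := Tuple.monotone_sort p hle
      simp only [Function.comp, ← hσ, Equiv.apply_symm_apply] at hmono
      rw [hks] at hcon
      exact absurd (hi) (not_le.mpr (lt_of_lt_of_le hcon hmono))
    have := (Finset.card_le_card hsub).trans_eq
      (card_filter_symm_lt σ (k - 1) (by omega))
    omega

/-- The SL count is a minimizer of `k ↦ p_(k) - qk/m` over `{0, …, m}`. -/
lemma slCount_spec (m : ℕ) (q : ℝ) (p : Fin m → ℝ) :
    slCount m q p ≤ m ∧ ∀ j ≤ m,
      orderStat m p (slCount m q p) - q * (slCount m q p) / m ≤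
        orderStat m p j - q * j / m := by
  set S := {k | k ≤ m ∧ ∀ j ≤ m,
    orderStat m p k - q * k / m ≤ orderStat m p j - q * j / m} with hS
  have hne : S.Nonempty := by
    obtain ⟨k, hkmem, hkmin⟩ := Finset.exists_min_image (Finset.range (m + 1))
      (fun k => orderStat m p k - q * k / m) ⟨0, by simp⟩
    exact ⟨k, by simpa using Nat.lt_succ_iff.mp (Finset.mem_range.mp hkmem),
      fun j hj => hkmin j (Finset.mem_range.mpr (Nat.lt_succ_of_le hj))⟩
  have hbdd : BddAbove S := ⟨m, fun k hk => hk.1⟩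
  have : slCount m q p ∈ S := Nat.sSup_mem hne hbdd
  exact this

/-- For any `p_1, …, p_m ∈ [0,1]` and any `q > 0`, the SL threshold
`τ_q = p_(R_q)` maximizes `t ↦ q F_m(t) - t` over `[0,1]`; equivalently, for
`π0 ∈ (0,1]`, `λ > 0`, `α = 1/(1+λ)` and `q = α/π0`, `τ_q` minimizes the estimated
weighted classification loss `L̂_λ(t; π0) = (1+λ)(π0 t - α F_m(t))` over `[0,1]`. -/
theorem stmt17 (m : ℕ) (hm : 0 < m) (p : Fin m → ℝ) (hp : ∀ i, p i ∈ Set.Icc (0:ℝ) 1)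
    (q : ℝ) (hq : 0 < q) :
    (slThreshold m q p ∈ Set.Icc (0:ℝ) 1 ∧
      IsMaxOn (fun t => q * ecdf m p t - t) (Set.Icc (0:ℝ) 1) (slThreshold m q p)) ∧
    (∀ π0 lam α : ℝ, π0 ∈ Set.Ioc (0:ℝ) 1 → 0 < lam → α = 1 / (1 + lam) →
      q = α / π0 →
      IsMinOn (fun t => (1 + lam) * (π0 * t - α * ecdf m p t)) (Set.Icc (0:ℝ) 1)
        (slThreshold m q p)) := by
  have hm' : (0:ℝ) < m := by exact_mod_cast hm
  obtain ⟨hRm, hRmin⟩ := slCount_spec m q p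
  set R := slCount m q p with hR
  set τ := slThreshold m q p with hτ
  have hτdef : τ = orderStat m p R := rfl
  -- τ ∈ [0,1]
  have hτmem : τ ∈ Set.Icc (0:ℝ) 1 := by
    rw [hτdef, orderStat]
    split
    · exact hp _
    · exact ⟨le_refl 0, zero_le_one⟩
  -- F_m(τ) ≥ R/m
  have hFτ : (R : ℝ) / m ≤ ecdf m p τ := by
    have := count_orderStat_ge p R hRm
    rw [ecdf]
    gcongr
    exact_mod_cast this
  have hmax : IsMaxOn (fun t => q * ecdf m p t - t) (Set.Icc (0:ℝ) 1) τ := by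
    rw [isMaxOn_iff]
    intro t ht
    set k := (Finset.univ.filter fun i => p i ≤ t).card with hkdef
    have hkm : k ≤ m := by
      simpa using (Finset.card_filter_le Finset.univ fun i => p i ≤ t)
    have h1 : orderStat m p k ≤ t := orderStat_count_le p t ht.1
    have h2 : orderStat m p R - q * R / m ≤ orderStat m p k - q * k / m :=
      hRmin k hkm
    have hecdf : ecdf m p t = (k : ℝ) / m := rfl
    have : q * ecdf m p t - t ≤ q * (R : ℝ) / m - τ := by
      rw [hecdf, hτdef, ← mul_div_assoc]
      linarith [h2]
    calc q * ecdf m p t - t ≤ q * (R : ℝ) / m - τ := this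
      _ ≤ q * ecdf m p τ - τ := by
          have : q * ((R : ℝ)/m) ≤ q * ecdf m p τ := by
            exact mul_le_mul_of_nonneg_left hFτ hq.le
          rw [mul_div_assoc]
          linarith
  refine ⟨⟨hτmem, hmax⟩, ?_⟩
  intro π0 lam α hπ0 hlam hα hqα
  have hπ0' : (0:ℝ) < π0 := hπ0.1
  have hαq : α = q * π0 := by
    field_simp at hqα
    linarith [hqα]
  rw [isMinOn_iff]
  intro t ht
  have hft := isMaxOn_iff.mp hmax t ht
  have hc : (0:ℝ) < (1 + lam) * π0 := by positivity
  have key : ∀ s : ℝ, (1 + lam) * (π0 * s - α * ecdf m p s)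
      = -((1 + lam) * π0) * (q * ecdf m p s - s) := by
    intro s
    rw [hαq]
    ring
  rw [key t, key τ]
  nlinarith [hft, hc]
end
end

section
/- For any p_1,…,p_m ∈ [0,1] and any q ∈ (0,1), let R_q be the SL rejection count at level q and let R_q^BH = max{k ∈ {0,1,…,m} : p_(k) ≤ qk/m} be the Benjamini–Hochberg rejection count. Then (i) R_q ≤ R_q^BH, and (ii) R_q ≥ 1 if and only if R_q^BH ≥ 1, which holds if and only if there exists k ∈ {1,…,m} with p_(k) ≤ qk/m. -/
open MeasureTheory ProbabilityTheory Filter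

noncomputable section

/-- The Benjamini–Hochberg rejection count `R_q^BH = max{k ∈ {0,…,m} : p_(k) ≤ qk/m}`. -/
def bhCount (m : ℕ) (q : ℝ) (p : Fin m → ℝ) : ℕ :=
  sSup {k | k ≤ m ∧ orderStat m p k ≤ q * k / m}

/-- For any `p_1, …, p_m ∈ [0,1]` and any `q ∈ (0,1)`:
(i) `R_q ≤ R_q^BH`; (ii) `R_q ≥ 1` iff `R_q^BH ≥ 1`, which holds iff there exists
`k ∈ {1,…,m}` with `p_(k) ≤ qk/m`. -/
theorem stmt18 (m : ℕ) (hm : 0 < m) (p : Fin m → ℝ) (hp : ∀ i, p i ∈ Set.Icc (0:ℝ) 1)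
    (q : ℝ) (hq : q ∈ Set.Ioo (0:ℝ) 1) :
    slCount m q p ≤ bhCount m q p ∧
    (1 ≤ slCount m q p ↔ 1 ≤ bhCount m q p) ∧
    (1 ≤ bhCount m q p ↔
      ∃ k, 1 ≤ k ∧ k ≤ m ∧ orderStat m p k ≤ q * k / m) := by
  set g : ℕ → ℝ := fun k => orderStat m p k - q * k / m with hg
  have h0 : orderStat m p 0 = 0 := by simp [orderStat]
  have hg0 : g 0 = 0 := by simp [hg, h0]
  -- SL set
  set S : Set ℕ := {k | k ≤ m ∧ ∀ j ≤ m, g k ≤ g j} with hS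
  have hSbdd : BddAbove S := ⟨m, fun k hk => hk.1⟩
  have hSne : S.Nonempty := by
    obtain ⟨k0, hk0mem, hk0min⟩ :=
      Finset.exists_min_image (Finset.range (m + 1)) g ⟨0, by simp⟩
    exact ⟨k0, Nat.lt_succ_iff.mp (Finset.mem_range.mp hk0mem),
      fun j hj => hk0min j (Finset.mem_range.mpr (Nat.lt_succ_iff.mpr hj))⟩
  have hslS : slCount m q p = sSup S := rfl
  have hR : slCount m q p ∈ S := by rw [hslS]; exact Nat.sSup_mem hSne hSbdd
  -- BH set
  set B : Set ℕ := {k | k ≤ m ∧ orderStat m p k ≤ q * k / m} with hB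
  have hBbdd : BddAbove B := ⟨m, fun k hk => hk.1⟩
  have hBne : B.Nonempty := ⟨0, Nat.zero_le m, by simp [h0]⟩
  have hbhB : bhCount m q p = sSup B := rfl
  have hK : bhCount m q p ∈ B := by rw [hbhB]; exact Nat.sSup_mem hBne hBbdd
  -- (i)
  have hRB : slCount m q p ∈ B := by
    have := hR.2 0 (Nat.zero_le m)
    rw [hg0] at this
    exact ⟨hR.1, by simpa [hg, sub_nonpos] using this⟩
  have h1 : slCount m q p ≤ bhCount m q p := by
    rw [hbhB]; exact le_csSup hBbdd hRB
  refine ⟨h1, ⟨fun h => le_trans h h1, fun h => ?_⟩, ⟨fun h => ?_, fun ⟨k, hk1, hkm, hk⟩ => ?_⟩⟩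
  · -- 1 ≤ bhCount → 1 ≤ slCount
    by_contra hc
    have hR0 : slCount m q p = 0 := by omega
    set K := bhCount m q p with hKdef
    have hgK : g K ≤ 0 := by simpa [hg, sub_nonpos] using hK.2
    have hgKmin : ∀ j ≤ m, g K ≤ g j := by
      intro j hj
      have h1 := hR.2 j hj
      have h2 := hR.2 K hK.1
      rw [hR0, hg0] at h1 h2
      have : g K = 0 := le_antisymm hgK h2
      rw [this]; exact h1
    have : K ≤ slCount m q p := by
      rw [hslS]; exact le_csSup hSbdd ⟨hK.1, hgKmin⟩
    omega
  · exact ⟨bhCount m q p, h, hK.1, hK.2⟩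
  · have : k ≤ bhCount m q p := by
      rw [hbhB]; exact le_csSup hBbdd ⟨hkm, hk⟩
    omega
end
end
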